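/- arXiv:2112.13912 — 6 statements merged into one kernel-verified Lean document; each statement's English description precedes it below -/
import Mathlib

section
/- Let n ≥ 3 be odd. The number of order-n Latin squares whose inner distance equals (n−1)/2 is exactly 4n. -/
/-- Distance between two symbols of `ZMod n`: the minimum of the two cyclic differences. -/
def zdist {n : ℕ} (a b : ZMod n) : ℕ := min (a - b).val (b - a).val

/-- An order-`n` Latin square: every row and every column is injective. -/
def IsLatin (n : ℕ) (L : Fin n → Fin n → ZMod n) : Prop :=
  (∀ i, Function.Injective (L i)) ∧ ∀ j, Function.Injective fun i => L i j

/-- The inner distance of a square: the minimum of `zdist` over all pairs of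
horizontally or vertically adjacent cells. -/
noncomputable def innerDist (n : ℕ) (L : Fin n → Fin n → ZMod n) : ℕ :=
  sInf { d : ℕ |
    (∃ i : Fin n, ∃ j : ℕ, ∃ hj : j + 1 < n,
      d = zdist (L i ⟨j, Nat.lt_of_succ_lt hj⟩) (L i ⟨j + 1, hj⟩)) ∨
    (∃ j : Fin n, ∃ i : ℕ, ∃ hi : i + 1 < n,
      d = zdist (L ⟨i, Nat.lt_of_succ_lt hi⟩ j) (L ⟨i + 1, hi⟩ j)) }

/-!
Write `n = 2k + 1`. No two symbols of `ZMod n` are further apart than `k`, and they are exactly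
`k` apart iff they differ by `±k`. So inner distance `k` forces every step between adjacent cells
to be `±k`. Injectivity of a row rules out a step followed by its negative, so every row and every
column is an arithmetic progression with step `±k`. Comparing the two resulting expansions of
`L i j` shows that the row steps themselves form an arithmetic progression inside `{k, -k}`, which
is constant because `2` is invertible. Hence `L i j = a + i s + j t` with `s, t ∈ {k, -k}`, and
conversely each of these `4n` squares qualifies because `±k` is a unit.
-/

namespace ZMod

variable {k : ℕ}

theorem val_add_val_neg_of_ne_zero {n : ℕ} [NeZero n] {x : ZMod n} (hx : x ≠ 0) :
    x.val + (-x).val = n := by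
  rw [neg_val, if_neg hx]
  have := x.val_lt
  omega

theorem two_mul_half : (2 : ZMod (2 * k + 1)) * k = -1 := by
  have h := natCast_self (2 * k + 1)
  push_cast at h
  linear_combination h

theorem isUnit_half : IsUnit (k : ZMod (2 * k + 1)) :=
  IsUnit.of_mul_eq_one (-2) (by linear_combination -two_mul_half)

theorem eq_zero_of_add_self_eq_zero {d : ZMod (2 * k + 1)} (h : d + d = 0) : d = 0 := by
  linear_combination (k + 1 : ZMod (2 * k + 1)) * h - d * two_mul_half

theorem half_ne_neg_half (hk : 0 < k) : (k : ZMod (2 * k + 1)) ≠ -k := by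
  intro h
  have hval := congrArg val (eq_zero_of_add_self_eq_zero (by linear_combination h))
  rw [val_cast_of_lt (by omega), val_zero] at hval
  omega

end ZMod

theorem zdist_le_half {k : ℕ} (a b : ZMod (2 * k + 1)) : zdist a b ≤ k := by
  rw [zdist, ← neg_sub a b]
  rcases eq_or_ne (a - b) 0 with h | h
  · simp [h]
  · have := ZMod.val_add_val_neg_of_ne_zero h
    omega

theorem zdist_eq_half_iff {k : ℕ} {a b : ZMod (2 * k + 1)} :
    zdist a b = k ↔ b - a = k ∨ b - a = -k := by
  have hk : ((k : ZMod (2 * k + 1))).val = k := ZMod.val_cast_of_lt (by omega)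
  rw [zdist, ← neg_sub a b, neg_eq_iff_eq_neg, neg_inj, or_comm]
  constructor
  · intro h
    rcases min_eq_iff.mp h with ⟨h, -⟩ | ⟨h, -⟩
    · left; rw [← ZMod.natCast_zmod_val (a - b), h]
    · right; rw [← neg_neg (a - b), ← ZMod.natCast_zmod_val (-(a - b)), h]
  · intro h
    have hval : (a - b).val = k ∨ (-(a - b)).val = k := by
      rcases h with h | h <;> simp only [h, neg_neg, hk, true_or, or_true]
    refine le_antisymm (neg_sub a b ▸ zdist_le_half a b) ?_
    rcases eq_or_ne (a - b) 0 with h0 | h0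
    · simp only [h0, neg_zero, ZMod.val_zero, or_self] at hval
      omega
    · have := ZMod.val_add_val_neg_of_ne_zero h0
      omega

section Steps

variable {G : Type*} {n : ℕ}

def HasPMSteps [AddGroup G] (e : G) (g : Fin n → G) : Prop :=
  ∀ j (hj : j + 1 < n), g ⟨j + 1, hj⟩ - g ⟨j, Nat.lt_of_succ_lt hj⟩ = e ∨
    g ⟨j + 1, hj⟩ - g ⟨j, Nat.lt_of_succ_lt hj⟩ = -e

theorem eq_add_nsmul_of_forall_succ_eq_add [AddMonoid G] {g : Fin n → G} {d : G}
    (h : ∀ j (hj : j + 1 < n), g ⟨j + 1, hj⟩ = g ⟨j, Nat.lt_of_succ_lt hj⟩ + d) (j : Fin n) :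
    g j = g ⟨0, j.pos⟩ + (j : ℕ) • d := by
  obtain ⟨j, hj⟩ := j
  induction j with
  | zero => simp
  | succ j ih => rw [h j hj, ih, add_assoc, ← succ_nsmul]

theorem eq_neg_of_pm_of_ne [AddGroup G] {e x y : G} (hx : x = e ∨ x = -e) (hy : y = e ∨ y = -e)
    (hxy : x ≠ y) : y = -x := by
  rcases hx with rfl | rfl <;> rcases hy with rfl | rfl <;> simp_all

theorem eq_zero_of_pm_progression [AddCommGroup G] (hG : ∀ d : G, d + d = 0 → d = 0)
    {e x d : G} (h0 : x = e ∨ x = -e) (h1 : x + d = e ∨ x + d = -e)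
    (h2 : x + d + d = e ∨ x + d + d = -e) : d = 0 := by
  by_contra hd
  have hx1 : x + d = -x := eq_neg_of_pm_of_ne h0 h1 (by simpa using hd)
  have hx2 : x + d + d = -(x + d) := eq_neg_of_pm_of_ne h1 h2 (by simpa using hd)
  rw [hx1, neg_neg] at hx2
  exact hd (hG d (by linear_combination (norm := abel) hx1 + hx2))

theorem HasPMSteps.exists_forall_succ_eq_add [AddCommGroup G] {e : G} {g : Fin n → G}
    (hg : Function.Injective g) (h : HasPMSteps e g) :
    ∃ d, (d = e ∨ d = -e) ∧
      ∀ j (hj : j + 1 < n), g ⟨j + 1, hj⟩ = g ⟨j, Nat.lt_of_succ_lt hj⟩ + d := by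
  rcases lt_or_ge n 2 with hn | hn
  · exact ⟨e, .inl rfl, fun j hj => by omega⟩
  refine ⟨_, h 0 hn, fun j hj => ?_⟩
  rw [← sub_eq_iff_eq_add']
  induction j with
  | zero => rfl
  | succ j ih =>
    rw [← ih (by omega)]
    by_contra hne
    have hback := eq_neg_of_pm_of_ne (h j (by omega)) (h (j + 1) hj) (Ne.symm hne)
    have hcycle : g ⟨j + 2, hj⟩ = g ⟨j, by omega⟩ := by
      rwa [neg_sub, sub_eq_sub_iff_add_eq_add, add_left_inj] at hback
    simpa using hg hcycle

theorem HasPMSteps.exists_eq_add_nsmul [AddCommGroup G] {e : G} {g : Fin n → G}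
    (hg : Function.Injective g) (h : HasPMSteps e g) :
    ∃ d, (d = e ∨ d = -e) ∧ ∀ j : Fin n, g j = g ⟨0, j.pos⟩ + (j : ℕ) • d := by
  obtain ⟨d, hd, hstep⟩ := h.exists_forall_succ_eq_add hg
  exact ⟨d, hd, eq_add_nsmul_of_forall_succ_eq_add hstep⟩

end Steps

theorem eq_add_mul_add_mul_of_rows_cols {R : Type*} [CommRing R] {n : ℕ}
    (hR : ∀ d : R, d + d = 0 → d = 0) (hn : 3 ≤ n)
    {L : Fin n → Fin n → R} {r c : Fin n → R} {e : R} (hr : ∀ i, r i = e ∨ r i = -e)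
    (hrow : ∀ i j, L i j = L i ⟨0, j.pos⟩ + (j : ℕ) * r i)
    (hcol : ∀ j i, L i j = L ⟨0, i.pos⟩ j + (i : ℕ) * c j) (i j : Fin n) :
    L i j = L ⟨0, i.pos⟩ ⟨0, i.pos⟩ + (i : ℕ) * c ⟨0, i.pos⟩ + (j : ℕ) * r ⟨0, i.pos⟩ := by
  let o : Fin n := ⟨0, by omega⟩
  let one : Fin n := ⟨1, by omega⟩
  let two : Fin n := ⟨2, by omega⟩
  have hcross : ∀ i j : Fin n, (i : ℕ) * (c j - c o) = (j : ℕ) * (r i - r o) := fun i j => by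
    linear_combination hrow i j - hcol j i + hcol o i - hrow o j
  have hlin : ∀ i : Fin n, r i = r o + (i : ℕ) * (r one - r o) := fun i => by
    have h11 := hcross one one
    have hi1 := hcross i one
    simp only [one, Nat.cast_one, one_mul] at h11 hi1
    linear_combination -hi1 + (i : ℕ) * h11
  have hconst : r one - r o = 0 := by
    refine eq_zero_of_pm_progression hR (hr o) (by simpa using hr one) ?_
    convert hr two using 2 <;> rw [hlin two] <;> simp only [two] <;> push_cast <;> ring
  linear_combination hrow i j + hcol o i + (j : ℕ) * hlin i + ((j : ℕ) : R) * ((i : ℕ) : R) * hconst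

theorem ZMod.natCast_finVal_injective (n : ℕ) :
    Function.Injective fun i : Fin n => ((i : ℕ) : ZMod n) := fun i j h => by
  have hval := congrArg ZMod.val h
  simp only [ZMod.val_cast_of_lt i.2, ZMod.val_cast_of_lt j.2] at hval
  exact Fin.ext hval

section AffineSquare

variable {n : ℕ}

def affineSquare (p : ZMod n × ZMod n × ZMod n) (i j : Fin n) : ZMod n :=
  p.1 + (i : ℕ) * p.2.1 + (j : ℕ) * p.2.2

theorem isLatin_affineSquare {p : ZMod n × ZMod n × ZMod n} (hs : IsUnit p.2.1)
    (ht : IsUnit p.2.2) : IsLatin n (affineSquare p) := by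
  constructor
  · intro i j j' h
    simp only [affineSquare, add_right_inj] at h
    exact ZMod.natCast_finVal_injective n (ht.mul_right_cancel h)
  · intro j i i' h
    simp only [affineSquare, add_left_inj, add_right_inj] at h
    exact ZMod.natCast_finVal_injective n (hs.mul_right_cancel h)

theorem affineSquare_injective (hn : 2 ≤ n) :
    Function.Injective (affineSquare : ZMod n × ZMod n × ZMod n → Fin n → Fin n → ZMod n) := by
  rintro ⟨a, s, t⟩ ⟨a', s', t'⟩ h
  have h00 := congrFun (congrFun h ⟨0, by omega⟩) ⟨0, by omega⟩
  have h10 := congrFun (congrFun h ⟨1, by omega⟩) ⟨0, by omega⟩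
  have h01 := congrFun (congrFun h ⟨0, by omega⟩) ⟨1, by omega⟩
  simp only [affineSquare, Nat.cast_zero, Nat.cast_one, zero_mul, one_mul, add_zero]
    at h00 h10 h01
  rw [h00, add_right_inj] at h10 h01
  rw [h00, h10, h01]

theorem hasPMSteps_affineSquare {e : ZMod n} {p : ZMod n × ZMod n × ZMod n}
    (hs : p.2.1 = e ∨ p.2.1 = -e) (ht : p.2.2 = e ∨ p.2.2 = -e) :
    (∀ i, HasPMSteps e (affineSquare p i)) ∧ ∀ j, HasPMSteps e fun i => affineSquare p i j := by
  constructor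
  · intro i j hj
    convert ht using 2 <;> simp only [affineSquare] <;> push_cast <;> ring
  · intro j i hi
    convert hs using 2 <;> simp only [affineSquare] <;> push_cast <;> ring

end AffineSquare

theorem innerDist_eq_half_iff {k : ℕ} (hk : 0 < k)
    (L : Fin (2 * k + 1) → Fin (2 * k + 1) → ZMod (2 * k + 1)) :
    innerDist (2 * k + 1) L = k ↔
      (∀ i, HasPMSteps (k : ZMod (2 * k + 1)) (L i)) ∧
        ∀ j, HasPMSteps (k : ZMod (2 * k + 1)) fun i => L i j := by
  constructor
  · intro h
    refine ⟨fun i j hj => zdist_eq_half_iff.mp ?_, fun j i hi => zdist_eq_half_iff.mp ?_⟩ <;>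
      refine le_antisymm (zdist_le_half _ _) (h.symm.trans_le (Nat.sInf_le ?_))
    exacts [.inl ⟨i, j, hj, rfl⟩, .inr ⟨j, i, hi, rfl⟩]
  · rintro ⟨hrows, hcols⟩
    have hsInf : ∀ S : Set ℕ, S.Nonempty → (∀ d ∈ S, d = k) → sInf S = k :=
      fun S hne hS => hS _ (Nat.sInf_mem hne)
    refine hsInf _ ⟨_, .inl ⟨⟨0, by omega⟩, 0, by omega, rfl⟩⟩ ?_
    rintro d (⟨i, j, hj, rfl⟩ | ⟨j, i, hi, rfl⟩)
    exacts [zdist_eq_half_iff.mpr (hrows i j hj), zdist_eq_half_iff.mpr (hcols j i hi)]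

theorem setOf_isLatin_innerDist_eq_half {k : ℕ} (hk : 0 < k) :
    {L | IsLatin (2 * k + 1) L ∧ innerDist (2 * k + 1) L = k} =
      affineSquare '' (Set.univ ×ˢ {(k : ZMod (2 * k + 1)), -(k : ZMod (2 * k + 1))} ×ˢ
        {(k : ZMod (2 * k + 1)), -(k : ZMod (2 * k + 1))}) := by
  have hunit : ∀ s : ZMod (2 * k + 1), s = k ∨ s = -k → IsUnit s := by
    rintro s (rfl | rfl)
    exacts [ZMod.isUnit_half, ZMod.isUnit_half.neg]
  ext L
  simp only [Set.mem_ofPred_eq, Set.mem_image, Set.mem_prod, Set.mem_univ, true_and,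
    Set.mem_insert_iff, Set.mem_singleton_iff]
  constructor
  · rintro ⟨hL, hI⟩
    obtain ⟨hrows, hcols⟩ := (innerDist_eq_half_iff hk L).mp hI
    choose r hr hrow using fun i => (hrows i).exists_eq_add_nsmul (hL.1 i)
    choose c hc hcol using fun j => (hcols j).exists_eq_add_nsmul (hL.2 j)
    simp only [nsmul_eq_mul] at hrow hcol
    let o : Fin (2 * k + 1) := ⟨0, by omega⟩
    refine ⟨(L o o, c o, r o), ⟨hc o, hr o⟩, funext₂ fun i j => ?_⟩
    exact (eq_add_mul_add_mul_of_rows_cols (fun _ => ZMod.eq_zero_of_add_self_eq_zero)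
      (by omega) hr hrow hcol i j).symm
  · rintro ⟨p, ⟨hs, ht⟩, rfl⟩
    exact ⟨isLatin_affineSquare (hunit _ hs) (hunit _ ht),
      (innerDist_eq_half_iff hk _).mpr (hasPMSteps_affineSquare hs ht)⟩

theorem stmt1 (n : ℕ) (hn : 3 ≤ n) (ho : Odd n) :
    {L : Fin n → Fin n → ZMod n | IsLatin n L ∧ innerDist n L = (n - 1) / 2}.ncard
      = 4 * n := by
  obtain ⟨k, rfl⟩ := ho
  have hk : 0 < k := by omega
  rw [show (2 * k + 1 - 1) / 2 = k by omega, setOf_isLatin_innerDist_eq_half hk,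
    Set.ncard_image_of_injective _ (affineSquare_injective (by omega)), Set.ncard_prod,
    Set.ncard_prod, Set.ncard_univ, Set.ncard_pair (ZMod.half_ne_neg_half hk), Nat.card_zmod]
  ring
end

section
/- Let n ≥ 3. Every order-n Latin square has inner distance at most ⌊(n−1)/2⌋, and there exists an order-n Latin square whose inner distance equals ⌊(n−1)/2⌋. -/
/-!
Two symbols of `ZMod n` at distance more than `⌊(n - 1)/2⌋` differ by exactly `n/2` (so `n` is
even), and two such steps in a row return to the starting symbol. Hence among the first three
(distinct) entries of any row of a Latin square, some adjacent pair is within `⌊(n - 1)/2⌋`.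
For the matching construction, order the symbols as `0, ⌈n/2⌉, 1, ⌈n/2⌉ + 1, 2, …`: consecutive
terms differ by `⌈n/2⌉` or by `-⌊(n - 1)/2⌋`, and the addition table `(i, j) ↦ σ i + σ j` of this
ordering `σ` is a Latin square whose rows and columns all inherit these steps.
-/

section Distance

variable {n : ℕ}

lemma zdist_comm (a b : ZMod n) : zdist a b = zdist b a :=
  min_comm _ _

lemma zdist_add_left (c a b : ZMod n) : zdist (c + a) (c + b) = zdist a b := by
  simp only [zdist, add_sub_add_left_eq_sub]

lemma zdist_add_right (c a b : ZMod n) : zdist (a + c) (b + c) = zdist a b := by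
  simp only [zdist, add_sub_add_right_eq_sub]

lemma le_zdist_add_natCast {d k : ℕ} (hd : d < n) (hkd : k ≤ d) (hkd' : k ≤ n - d)
    (a : ZMod n) : k ≤ zdist a (a + d) := by
  have : NeZero n := ⟨by omega⟩
  rw [zdist, sub_add_cancel_left, add_sub_cancel_left, ZMod.neg_val', ZMod.val_cast_of_lt hd]
  rcases Nat.eq_zero_or_pos d with rfl | hpos
  · omega
  · rw [Nat.mod_eq_of_lt (by omega)]; omega

lemma two_mul_val_sub_eq_of_lt_zdist [NeZero n] {a b : ZMod n} (h : (n - 1) / 2 < zdist a b) :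
    2 * (b - a).val = n := by
  rw [zdist, ← neg_sub b a, ZMod.neg_val'] at h
  have hlt := ZMod.val_lt (b - a)
  rcases Nat.eq_zero_or_pos (b - a).val with h0 | hpos
  · rw [h0] at h; omega
  · rw [Nat.mod_eq_of_lt (by omega)] at h; omega

lemma eq_of_lt_zdist_of_lt_zdist [NeZero n] {a b c : ZMod n} (hab : (n - 1) / 2 < zdist a b)
    (hbc : (n - 1) / 2 < zdist b c) : a = c := by
  have hu := two_mul_val_sub_eq_of_lt_zdist hab
  have hv := two_mul_val_sub_eq_of_lt_zdist hbc
  have hca : (c - a).val = 0 := by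
    rw [← sub_add_sub_cancel c b a, ZMod.val_add,
      show (c - b).val + (b - a).val = n by omega, Nat.mod_self]
  exact (sub_eq_zero.mp ((ZMod.val_eq_zero _).mp hca)).symm

end Distance

section InnerDist

variable {n : ℕ} {L : Fin n → Fin n → ZMod n}

lemma innerDist_le_zdist_row (i : Fin n) {j : ℕ} (hj : j + 1 < n) :
    innerDist n L ≤ zdist (L i ⟨j, Nat.lt_of_succ_lt hj⟩) (L i ⟨j + 1, hj⟩) :=
  Nat.sInf_le (Or.inl ⟨i, j, hj, rfl⟩)

lemma le_innerDist {k : ℕ} (hn : 2 ≤ n)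
    (hrow : ∀ (i : Fin n) (j : ℕ) (hj : j + 1 < n),
      k ≤ zdist (L i ⟨j, Nat.lt_of_succ_lt hj⟩) (L i ⟨j + 1, hj⟩))
    (hcol : ∀ (j : Fin n) (i : ℕ) (hi : i + 1 < n),
      k ≤ zdist (L ⟨i, Nat.lt_of_succ_lt hi⟩ j) (L ⟨i + 1, hi⟩ j)) :
    k ≤ innerDist n L := by
  refine le_csInf ⟨_, Or.inl ⟨⟨0, by omega⟩, 0, by omega, rfl⟩⟩ ?_
  rintro d (⟨i, j, hj, rfl⟩ | ⟨j, i, hi, rfl⟩)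
  exacts [hrow i j hj, hcol j i hi]

lemma innerDist_le_of_injective (hn : 3 ≤ n) (i : Fin n) (hL : Function.Injective (L i)) :
    innerDist n L ≤ (n - 1) / 2 := by
  have : NeZero n := ⟨by omega⟩
  by_contra! h
  have h01 := h.trans_le (innerDist_le_zdist_row i (j := 0) (by omega))
  have h12 := h.trans_le (innerDist_le_zdist_row i (j := 1) (by omega))
  have := hL (eq_of_lt_zdist_of_lt_zdist h01 h12)
  simp [Fin.ext_iff] at this

end InnerDist

section AddSquare

variable {n : ℕ}

def addSquare (f : ℕ → ZMod n) (i j : Fin n) : ZMod n := f i + f j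

lemma isLatin_addSquare {f : ℕ → ZMod n} (hf : Set.InjOn f (Set.Iio n)) :
    IsLatin n (addSquare f) := by
  refine ⟨fun i j₁ j₂ h => ?_, fun j i₁ i₂ h => ?_⟩
  · exact Fin.ext (hf j₁.isLt j₂.isLt (add_left_cancel h))
  · exact Fin.ext (hf i₁.isLt i₂.isLt (add_right_cancel h))

lemma le_innerDist_addSquare {f : ℕ → ZMod n} {k : ℕ} (hn : 2 ≤ n)
    (hf : ∀ j, j + 1 < n → k ≤ zdist (f j) (f (j + 1))) : k ≤ innerDist n (addSquare f) := by
  refine le_innerDist hn (fun i j hj => ?_) (fun j i hi => ?_)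
  · simpa only [addSquare, zdist_add_left] using hf j hj
  · simpa only [addSquare, zdist_add_right] using hf i hi

end AddSquare

def interleave (n j : ℕ) : ℕ := j / 2 + j % 2 * ((n + 1) / 2)

section Interleave

variable {n : ℕ}

lemma interleave_of_even {j : ℕ} (h : j % 2 = 0) : interleave n j = j / 2 := by
  simp [interleave, h]

lemma interleave_of_odd {j : ℕ} (h : j % 2 = 1) : interleave n j = j / 2 + (n + 1) / 2 := by
  simp [interleave, h]

lemma interleave_lt {j : ℕ} (hj : j < n) : interleave n j < n := by
  rcases Nat.mod_two_eq_zero_or_one j with h | h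
  · rw [interleave_of_even h]; omega
  · rw [interleave_of_odd h]; omega

lemma injOn_interleave : Set.InjOn (interleave n) (Set.Iio n) := by
  intro j₁ hj₁ j₂ hj₂ h
  rw [Set.mem_Iio] at hj₁ hj₂
  rcases Nat.mod_two_eq_zero_or_one j₁ with h₁ | h₁ <;>
    rcases Nat.mod_two_eq_zero_or_one j₂ with h₂ | h₂ <;>
    simp only [interleave_of_even, interleave_of_odd, h₁, h₂] at h <;> omega

lemma injOn_interleave_cast : Set.InjOn (fun j => (interleave n j : ZMod n)) (Set.Iio n) :=
  fun j₁ hj₁ j₂ hj₂ h => injOn_interleave hj₁ hj₂ <| by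
    simpa only [ZMod.val_cast_of_lt (interleave_lt hj₁), ZMod.val_cast_of_lt (interleave_lt hj₂)]
      using congrArg ZMod.val h

lemma le_zdist_interleave (hn : 2 ≤ n) (j : ℕ) :
    (n - 1) / 2 ≤ zdist (interleave n j : ZMod n) (interleave n (j + 1)) := by
  rcases Nat.mod_two_eq_zero_or_one j with h | h
  · have hstep : interleave n (j + 1) = interleave n j + (n + 1) / 2 := by
      rw [interleave_of_even h, interleave_of_odd (by omega)]; omega
    rw [hstep, Nat.cast_add]
    exact le_zdist_add_natCast (by omega) (by omega) (by omega) _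
  · have hstep : interleave n j = interleave n (j + 1) + (n - 1) / 2 := by
      rw [interleave_of_odd h, interleave_of_even (by omega)]; omega
    rw [zdist_comm, hstep, Nat.cast_add]
    exact le_zdist_add_natCast (by omega) le_rfl (by omega) _

end Interleave

theorem stmt3 (n : ℕ) (hn : 3 ≤ n) :
    (∀ L : Fin n → Fin n → ZMod n, IsLatin n L → innerDist n L ≤ (n - 1) / 2) ∧
    ∃ L : Fin n → Fin n → ZMod n, IsLatin n L ∧ innerDist n L = (n - 1) / 2 := by
  have upper : ∀ L : Fin n → Fin n → ZMod n, IsLatin n L → innerDist n L ≤ (n - 1) / 2 :=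
    fun L hL => innerDist_le_of_injective hn ⟨0, by omega⟩ (hL.1 _)
  have latin := isLatin_addSquare (injOn_interleave_cast (n := n))
  refine ⟨upper, _, latin, le_antisymm (upper _ latin) ?_⟩
  exact le_innerDist_addSquare (by omega) fun j _ => le_zdist_interleave (by omega) j
end

section
/- Let n ≥ 3 and let k ≥ 1 be a natural number. Then 2n divides the number of order-n Latin squares whose inner distance equals k. -/
/-- The dihedral action on squares: `r c` subtracts `c` from every entry,
`sr c` sends every entry `x` to `c - x`. -/
def dact {n : ℕ} (g : DihedralGroup n) (L : Fin n → Fin n → ZMod n) :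
    Fin n → Fin n → ZMod n :=
  match g with
  | .r c => fun i j => L i j - c
  | .sr c => fun i j => c - L i j

lemma dact_one {n : ℕ} (L : Fin n → Fin n → ZMod n) : dact 1 L = L := by
  funext i j
  simp [dact, DihedralGroup.one_def, -DihedralGroup.r_zero]

lemma dact_mul {n : ℕ} (g h : DihedralGroup n) (L : Fin n → Fin n → ZMod n) :
    dact (g * h) L = dact g (dact h L) := by
  funext i j
  cases g <;> cases h <;> simp [dact, DihedralGroup.r_mul_r, DihedralGroup.r_mul_sr,
    DihedralGroup.sr_mul_r, DihedralGroup.sr_mul_sr] <;> ring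

lemma zdist_sub_right {n : ℕ} (a b c : ZMod n) : zdist (a - c) (b - c) = zdist a b := by
  simp only [zdist]
  congr 1 <;> congr 1 <;> ring

lemma zdist_const_sub {n : ℕ} (a b c : ZMod n) : zdist (c - a) (c - b) = zdist a b := by
  simp only [zdist]
  rw [min_comm]
  congr 1 <;> congr 1 <;> ring

lemma innerDist_dact {n : ℕ} (g : DihedralGroup n) (L : Fin n → Fin n → ZMod n) :
    innerDist n (dact g L) = innerDist n L := by
  cases g <;>
    simp only [innerDist, dact, zdist_sub_right, zdist_const_sub]

lemma isLatin_dact {n : ℕ} (g : DihedralGroup n) (L : Fin n → Fin n → ZMod n)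
    (hL : IsLatin n L) : IsLatin n (dact g L) := by
  obtain ⟨h1, h2⟩ := hL
  cases g with
  | r c =>
      exact ⟨fun i => (sub_left_injective).comp (h1 i),
        fun j => (sub_left_injective).comp (h2 j)⟩
  | sr c =>
      exact ⟨fun i => (sub_right_injective).comp (h1 i),
        fun j => (sub_right_injective).comp (h2 j)⟩

/-- At most one nonzero element of `ZMod n` is 2-torsion. -/
lemma two_torsion_unique {n : ℕ} [NeZero n] {a b : ZMod n}
    (ha : a + a = 0) (hb : b + b = 0) (ha0 : a ≠ 0) (hb0 : b ≠ 0) : a = b := by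
  have hva : (a + a).val = 0 := by rw [ha]; simp
  have hvb : (b + b).val = 0 := by rw [hb]; simp
  rw [ZMod.val_add] at hva hvb
  have hva0 : a.val ≠ 0 := fun h => ha0 ((ZMod.val_eq_zero a).mp h)
  have hvb0 : b.val ≠ 0 := fun h => hb0 ((ZMod.val_eq_zero b).mp h)
  have hla : a.val < n := ZMod.val_lt a
  have hlb : b.val < n := ZMod.val_lt b
  obtain ⟨p, hp⟩ := Nat.dvd_of_mod_eq_zero hva
  obtain ⟨q, hq⟩ := Nat.dvd_of_mod_eq_zero hvb
  have hp1 : a.val + a.val = n := by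
    match p, hp with
    | 0, hp => omega
    | 1, hp => omega
    | (m + 2), hp =>
      have : n * 2 ≤ n * (m + 2) := Nat.mul_le_mul_left n (by omega)
      omega
  have hq1 : b.val + b.val = n := by
    match q, hq with
    | 0, hq => omega
    | 1, hq => omega
    | (m + 2), hq =>
      have : n * 2 ≤ n * (m + 2) := Nat.mul_le_mul_left n (by omega)
      omega
  exact ZMod.val_injective n (by omega)

/-- A finite group acting freely on a finite type has cardinality dividing
the cardinality of the type. -/
lemma free_action_dvd {G α : Type*} [Group G] [Finite G] [Finite α] [MulAction G α]
    (hfree : ∀ (g : G) (a : α), g • a = a → g = 1) :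
    Nat.card G ∣ Nat.card α := by
  classical
  haveI : Fintype α := Fintype.ofFinite α
  haveI : Fintype G := Fintype.ofFinite G
  haveI : Fintype (MulAction.orbitRel.Quotient G α) := Fintype.ofFinite _
  rw [Nat.card_eq_fintype_card, Nat.card_eq_fintype_card,
    Fintype.card_congr (MulAction.selfEquivSigmaOrbits G α)]
  have horb : ∀ a : α, Nat.card (MulAction.orbit G a) = Fintype.card G := by
    intro a
    have hstab : MulAction.stabilizer G a = ⊥ := by
      ext g
      simp only [MulAction.mem_stabilizer_iff, Subgroup.mem_bot]
      exact ⟨fun h => hfree g a h, fun h => by simp [h]⟩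
    rw [Nat.card_congr (MulAction.orbitEquivQuotientStabilizer G a), hstab,
      Nat.card_congr (QuotientGroup.quotientBot (G := G)).toEquiv,
      Nat.card_eq_fintype_card]
  rw [Fintype.card_sigma]
  have hsum : ∀ ω ∈ (Finset.univ : Finset (MulAction.orbitRel.Quotient G α)),
      Fintype.card (MulAction.orbit G ω.out) = Fintype.card G := fun ω _ => by
    rw [← Nat.card_eq_fintype_card, horb]
  rw [Finset.sum_congr rfl hsum, Finset.sum_const, smul_eq_mul]
  exact dvd_mul_left _ _

theorem stmt6 (n : ℕ) (hn : 3 ≤ n) (k : ℕ) (hk : 1 ≤ k) :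
    2 * n ∣ {L : Fin n → Fin n → ZMod n | IsLatin n L ∧ innerDist n L = k}.ncard := by
  haveI : NeZero n := ⟨by omega⟩
  set S := {L : Fin n → Fin n → ZMod n | IsLatin n L ∧ innerDist n L = k} with hS
  -- membership preserved by the action
  have pres : ∀ (g : DihedralGroup n) (L : Fin n → Fin n → ZMod n), L ∈ S → dact g L ∈ S := by
    intro g L hL
    exact ⟨isLatin_dact g L hL.1, by rw [innerDist_dact]; exact hL.2⟩
  letI : SMul (DihedralGroup n) ↥S := ⟨fun g L => ⟨dact g L.1, pres g L.1 L.2⟩⟩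
  have smul_def : ∀ (g : DihedralGroup n) (L : ↥S), (g • L : ↥S).1 = dact g L.1 :=
    fun g L => rfl
  letI : MulAction (DihedralGroup n) ↥S :=
    { one_smul := fun L => Subtype.ext (dact_one L.1)
      mul_smul := fun g h L => Subtype.ext (dact_mul g h L.1) }
  -- freeness
  have hfree : ∀ (g : DihedralGroup n) (L : ↥S), g • L = L → g = 1 := by
    intro g L hgL
    have hfix : dact g L.1 = L.1 := congrArg Subtype.val hgL
    cases g with
    | r c =>
        have h0 : (0 : ℕ) < n := by omega
        have := congrFun (congrFun hfix ⟨0, h0⟩) ⟨0, h0⟩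
        simp only [dact] at this
        have hc : c = 0 := by
          have := sub_eq_self.mp this
          exact this
        rw [hc, DihedralGroup.one_def]
    | sr c =>
        exfalso
        obtain ⟨⟨hrow, _⟩, _⟩ := L.2
        have h0 : (0 : ℕ) < n := by omega
        have h1 : (1 : ℕ) < n := by omega
        have h2 : (2 : ℕ) < n := by omega
        have e0 := congrFun (congrFun hfix ⟨0, h0⟩) ⟨0, h0⟩
        have e1 := congrFun (congrFun hfix ⟨0, h0⟩) ⟨1, h1⟩
        have e2 := congrFun (congrFun hfix ⟨0, h0⟩) ⟨2, h2⟩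
        simp only [dact] at e0 e1 e2
        have hxy : L.1 ⟨0, h0⟩ ⟨0, h0⟩ ≠ L.1 ⟨0, h0⟩ ⟨1, h1⟩ := fun h => by
          have := hrow ⟨0, h0⟩ h
          simp [Fin.ext_iff] at this
        have hxz : L.1 ⟨0, h0⟩ ⟨0, h0⟩ ≠ L.1 ⟨0, h0⟩ ⟨2, h2⟩ := fun h => by
          have := hrow ⟨0, h0⟩ h
          simp [Fin.ext_iff] at this
        have hyz : L.1 ⟨0, h0⟩ ⟨1, h1⟩ ≠ L.1 ⟨0, h0⟩ ⟨2, h2⟩ := fun h => by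
          have := hrow ⟨0, h0⟩ h
          simp [Fin.ext_iff] at this
        have ha : (L.1 ⟨0, h0⟩ ⟨0, h0⟩ - L.1 ⟨0, h0⟩ ⟨1, h1⟩)
            + (L.1 ⟨0, h0⟩ ⟨0, h0⟩ - L.1 ⟨0, h0⟩ ⟨1, h1⟩) = 0 := by
          linear_combination e1 - e0
        have hb : (L.1 ⟨0, h0⟩ ⟨0, h0⟩ - L.1 ⟨0, h0⟩ ⟨2, h2⟩)
            + (L.1 ⟨0, h0⟩ ⟨0, h0⟩ - L.1 ⟨0, h0⟩ ⟨2, h2⟩) = 0 := by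
          linear_combination e2 - e0
        have ha0 := sub_ne_zero.mpr hxy
        have hb0 := sub_ne_zero.mpr hxz
        have := two_torsion_unique ha hb ha0 hb0
        exact hyz (by linear_combination -this)
  -- finiteness
  haveI : Finite ↥S := Finite.Set.subset Set.univ (Set.subset_univ S)
  have hcard : Nat.card (DihedralGroup n) = 2 * n := by
    rw [Nat.card_eq_fintype_card, DihedralGroup.card]
  rw [← Nat.card_coe_set_eq, ← hcard]
  exact free_action_dvd hfree
end

section
/- Let n ≥ 6 be even. The number of injective functions r : Fin n → ZMod n with r(0) = 1 such that dist(r(j+1), r(j)) ≥ n/2 − 1 for all 0 ≤ j ≤ n−2 and also dist(r(0), r(n−1)) ≥ n/2 − 1 equals n + 2 if n ≡ 0 (mod 4), and equals n if n ≡ 2 (mod 4). -/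
namespace S10


lemma int_dvd_small {M z : ℤ} (h : M ∣ z) (h1 : -M < z) (h2 : z < M) : z = 0 := by
  rcases h with ⟨c, rfl⟩
  rcases lt_trichotomy c 0 with hc | hc | hc
  · nlinarith
  · simp [hc]
  · nlinarith

def pat (m j : ℕ) : ℤ :=
  if j % (2*m) = 0 then 0 else if j % (2*m) < m then 1 else if j % (2*m) = m then 0 else -1

def tent (m k : ℕ) : ℤ := if k = 0 then 0 else min (k:ℤ) (2*(m:ℤ)+1-(k:ℤ)) - 1

lemma pat_mem (m j : ℕ) : pat m j = -1 ∨ pat m j = 0 ∨ pat m j = 1 := by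
  unfold pat; split_ifs <;> simp

lemma pat_mod (m j : ℕ) : pat m (j % (2*m)) = pat m j := by
  unfold pat; rw [Nat.mod_mod_of_dvd j dvd_rfl]

lemma pat_period (m j : ℕ) : pat m (j + 2*m) = pat m j := by
  unfold pat; rw [Nat.add_mod_right]

lemma tent_nonneg {m k : ℕ} (hk : k < 2*m) : 0 ≤ tent m k := by
  unfold tent; simp only [min_def]; split_ifs <;> omega

lemma tent_le {m k : ℕ} (hm : 1 ≤ m) (hk : k < 2*m) : tent m k ≤ (m : ℤ) - 1 := by
  unfold tent; simp only [min_def]; split_ifs <;> omega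

lemma tent_step {m k : ℕ} (hk : k + 1 < 2*m) :
    tent m (k+1) - tent m k = pat m k := by
  have h2 : k % (2*m) = k := Nat.mod_eq_of_lt (by omega)
  unfold tent pat
  simp only [h2, min_def]
  split_ifs <;> try contradiction
  all_goals push_cast <;> omega

lemma tent_wrap {m : ℕ} (hm : 3 ≤ m) :
    tent m 0 - tent m (2*m-1) = pat m (2*m-1) := by
  have h2 : (2*m-1) % (2*m) = 2*m-1 := Nat.mod_eq_of_lt (by omega)
  unfold tent pat
  simp only [h2, min_def]
  split_ifs <;> try contradiction
  all_goals push_cast <;> omega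

-- tent injectivity on same parity classes
lemma tent_inj {m k k' : ℕ} (hm : 3 ≤ m) (hk : k < 2*m) (hk' : k' < 2*m)
    (hpar : k % 2 = k' % 2) (h : tent m k = tent m k') : k = k' := by
  unfold tent at h
  simp only [min_def] at h
  split_ifs at h <;> omega





def sg (n m : ℕ) : ZMod n → ZMod n :=
  fun x => 1 + x * (m : ZMod n) + ((tent m x.val : ℤ) : ZMod n)

variable {n m : ℕ}

lemma natCast_val_self [NeZero n] (x : ZMod n) : ((x.val : ℕ) : ZMod n) = x := by
  rw [ZMod.natCast_val, ZMod.cast_id]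

section
variable [NeZero n] (hm : 3 ≤ m) (hn : n = 2*m)
include hm hn

lemma sg_step (x : ZMod n) :
    sg n m (x + 1) = sg n m x + (m : ZMod n) + ((pat m x.val : ℤ) : ZMod n) := by
  have hx : x.val < n := ZMod.val_lt x
  have hadd : x + 1 = ((x.val + 1 : ℕ) : ZMod n) := by push_cast [natCast_val_self]; ring
  have key : ((tent m (x+1).val : ℤ) : ZMod n)
      = ((tent m x.val : ℤ) : ZMod n) + ((pat m x.val : ℤ) : ZMod n) := by
    rcases Nat.lt_or_ge (x.val + 1) n with h | h
    · have hv : (x + 1).val = x.val + 1 := by rw [hadd, ZMod.val_natCast_of_lt h]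
      have hts : tent m (x.val + 1) - tent m x.val = pat m x.val := tent_step (by omega)
      rw [hv, ← hts]; push_cast; ring
    · have hx1 : x.val + 1 = n := by omega
      have hv0 : (x + 1).val = 0 := by rw [hadd, hx1, ZMod.natCast_self, ZMod.val_zero]
      have hts : tent m 0 - tent m (n-1) = pat m (n-1) := by rw [hn]; exact tent_wrap hm
      rw [hv0, show x.val = n - 1 by omega, ← hts]; push_cast; ring
  unfold sg
  rw [key]; ring

lemma sg_inj : Function.Injective (sg n m) := by
  intro x y h
  have hx : x.val < 2*m := by have := ZMod.val_lt x; omega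
  have hy : y.val < 2*m := by have := ZMod.val_lt y; omega
  have hdvd : (n : ℤ) ∣ ((x.val : ℤ) - y.val) * m + tent m x.val - tent m y.val := by
    rw [← ZMod.intCast_zmod_eq_zero_iff_dvd]
    push_cast [natCast_val_self]
    unfold sg at h
    linear_combination h
  have hb1 := tent_nonneg (m := m) hx
  have hb2 := tent_nonneg (m := m) hy
  have hb3 := tent_le (m := m) (by omega) hx
  have hb4 := tent_le (m := m) (by omega) hy
  rcases Nat.even_or_odd' (x.val : ℕ) with ⟨a, hxv | hxv⟩ <;>
    rcases Nat.even_or_odd' (y.val : ℕ) with ⟨b, hyv | hyv⟩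
  · -- even, even
    have h2 : (n:ℤ) ∣ (tent m x.val - tent m y.val) := by
      rcases hdvd with ⟨c, hc⟩
      have hint : ((x.val : ℤ) - y.val) * m = ((a:ℤ) - b) * n := by push_cast [hxv, hyv, hn]; ring
      exact ⟨c - ((a:ℤ)-b), by rw [hint] at hc; push_cast at hc ⊢; linarith⟩
    have := int_dvd_small h2 (by push_cast [hn]; omega) (by push_cast [hn]; omega)
    have heq : tent m x.val = tent m y.val := by omega
    exact ZMod.val_injective n (tent_inj hm hx hy (by omega) heq)
  · -- even, odd
    exfalso
    have h2 : (n:ℤ) ∣ ((m : ℤ) + tent m x.val - tent m y.val) := by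
      rcases hdvd with ⟨c, hc⟩
      have hint : ((x.val : ℤ) - y.val) * m = ((a:ℤ) - b - 1) * n + m := by push_cast [hxv, hyv, hn]; ring
      exact ⟨c - ((a:ℤ)-b-1), by rw [hint] at hc; push_cast at hc ⊢; linarith⟩
    have := int_dvd_small h2 (by push_cast [hn]; omega) (by push_cast [hn]; omega)
    omega
  · -- odd, even
    exfalso
    have h2 : (n:ℤ) ∣ ((m : ℤ) + tent m y.val - tent m x.val) := by
      rcases hdvd with ⟨c, hc⟩
      have hint : ((x.val : ℤ) - y.val) * m = ((a:ℤ) - b + 1) * n - m := by push_cast [hxv, hyv, hn]; ring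
      exact ⟨((a:ℤ)-b+1) - c, by rw [hint] at hc; push_cast at hc ⊢; linarith⟩
    have := int_dvd_small h2 (by push_cast [hn]; omega) (by push_cast [hn]; omega)
    omega
  · -- odd, odd
    have h2 : (n:ℤ) ∣ (tent m x.val - tent m y.val) := by
      rcases hdvd with ⟨c, hc⟩
      have hint : ((x.val : ℤ) - y.val) * m = ((a:ℤ) - b) * n := by push_cast [hxv, hyv, hn]; ring
      exact ⟨c - ((a:ℤ)-b), by rw [hint] at hc; push_cast at hc ⊢; linarith⟩
    have := int_dvd_small h2 (by push_cast [hn]; omega) (by push_cast [hn]; omega)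
    have heq : tent m x.val = tent m y.val := by omega
    exact ZMod.val_injective n (tent_inj hm hx hy (by omega) heq)

lemma zdist_iff (a b : ZMod n) :
    m - 1 ≤ zdist a b ↔ ((a-b).val = m-1 ∨ (a-b).val = m ∨ (a-b).val = m+1) := by
  unfold zdist
  have hba : b - a = -(a - b) := by ring
  rcases eq_or_ne (a - b) 0 with h | h
  · rw [hba, h]; simp; omega
  · have hnv : (-(a-b)).val = n - (a-b).val := by
      rw [ZMod.neg_val]; simp [h]
    have h1 : 1 ≤ (a-b).val := by
      rcases Nat.eq_zero_or_pos (a-b).val with h0 | h0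
      · exact absurd ((ZMod.val_eq_zero _).mp h0) h
      · omega
    have h2 := ZMod.val_lt (a-b)
    rw [hba, hnv]
    omega

end



lemma pat_eval {m i : ℕ} (hi : i < 2*m) :
    pat m i = if i = 0 then 0 else if i < m then 1 else if i = m then 0 else -1 := by
  unfold pat; rw [Nat.mod_eq_of_lt hi]

lemma ivt (f : ℕ → ℤ) (hstep : ∀ i, |f (i+1) - f i| ≤ 1) (a : ℕ) :
    ∀ b v, a ≤ b → (f a ≤ v ∧ v ≤ f b ∨ f b ≤ v ∧ v ≤ f a) →
    ∃ k, a ≤ k ∧ k ≤ b ∧ f k = v := by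
  intro b
  induction b with
  | zero =>
    intro v hab h
    obtain rfl : a = 0 := by omega
    exact ⟨0, le_refl _, le_refl _, by omega⟩
  | succ b ih =>
    intro v hab h
    rcases Nat.eq_or_lt_of_le hab with he | hlt
    · exact ⟨b+1, by omega, le_refl _, by rw [← he] at h ⊢; omega⟩
    · have hab' : a ≤ b := by omega
      have hs := abs_le.mp (hstep b)
      by_cases hc : f a ≤ v ∧ v ≤ f b ∨ f b ≤ v ∧ v ≤ f a
      · obtain ⟨k, h1, h2, h3⟩ := ih v hab' hc
        exact ⟨k, h1, by omega, h3⟩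
      · push_neg at hc
        refine ⟨b+1, by omega, le_refl _, by omega⟩

lemma classify (m : ℕ) (hm : 3 ≤ m) (e : ℕ → ℤ)
    (he : ∀ j, e j = -1 ∨ e j = 0 ∨ e j = 1)
    (hper : ∀ j, e (j + 2*m) = e j)
    (hsum : (∑ j ∈ Finset.range (2*m), e j) = 0)
    (hD : ∀ j k : ℕ, j < k → k < j + 2*m →
      ¬ ((2*(m:ℤ)) ∣ ((k : ℤ) - (j : ℤ)) * (m:ℤ)
          + (∑ i ∈ Finset.range k, e i) - (∑ i ∈ Finset.range j, e i))) :
    ∃ c : ℕ, ∀ i : ℕ, e (c + i) = pat m i := by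
  classical
  set E : ℕ → ℤ := fun k => ∑ i ∈ Finset.range k, e i with hE
  have hEsucc : ∀ k, E (k+1) = E k + e k := by
    intro k; simp [hE, Finset.sum_range_succ]
  have hstep1 : ∀ k, |E (k+1) - E k| ≤ 1 := by
    intro k; rw [hEsucc]; rcases he k with h | h | h <;> simp [h]
  -- periodicity of E
  have hIco : ∀ k, (∑ i ∈ Finset.Ico k (k + 2*m), e i) = 0 := by
    intro k
    induction k with
    | zero => simpa using hsum
    | succ k ih =>
      have h1 : (∑ i ∈ Finset.Ico k (k + 2*m + 1), e i)
          = (∑ i ∈ Finset.Ico k (k + 2*m), e i) + e (k + 2*m) :=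
        Finset.sum_Ico_succ_top (by omega) _
      have h2 : (∑ i ∈ Finset.Ico k (k + 2*m + 1), e i)
          = e k + (∑ i ∈ Finset.Ico (k+1) (k + 2*m + 1), e i) :=
        Finset.sum_eq_sum_Ico_succ_bot (by omega) _
      have h4 := hper k
      have h3 : k + 1 + 2*m = k + 2*m + 1 := by omega
      rw [h3]
      omega
  have hEper : ∀ k, E (k + 2*m) = E k := by
    intro k
    have : E (k + 2*m) - E k = ∑ i ∈ Finset.Ico k (k + 2*m), e i := by
      rw [hE]; rw [Finset.sum_Ico_eq_sub _ (by omega : k ≤ k + 2*m)]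
    rw [hIco] at this; omega
  have hEperq : ∀ q k, E (k + 2*m*q) = E k := by
    intro q
    induction q with
    | zero => simp
    | succ q ih => intro k; have h3 : k + 2*m*(q+1) = (k + 2*m*q) + 2*m := by ring
                   rw [h3, hEper, ih]
  have hEmod : ∀ k, E k = E (k % (2*m)) := by
    intro k
    conv_lhs => rw [← Nat.mod_add_div k (2*m)]
    rw [hEperq]
  have hecong : ∀ j j', j % (2*m) = j' % (2*m) → e j = e j' := by
    have h1 : ∀ q k, e (k + 2*m*q) = e k := by
      intro q
      induction q with
      | zero => simp
      | succ q ih => intro k; have h3 : k + 2*m*(q+1) = (k + 2*m*q) + 2*m := by ring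
                     rw [h3, hper, ih]
    intro j j' h
    have hj : e j = e (j % (2*m)) := by
      conv_lhs => rw [← Nat.mod_add_div j (2*m)]
      rw [h1]
    have hj' : e j' = e (j' % (2*m)) := by
      conv_lhs => rw [← Nat.mod_add_div j' (2*m)]
      rw [h1]
    rw [hj, hj', h]
  -- distinctness conditions
  have Deven : ∀ j k : ℕ, j < k → k < j + 2*m → (k - j) % 2 = 0 → E k ≠ E j := by
    intro j k h1 h2 h3 heq
    apply hD j k h1 h2
    obtain ⟨a, ha⟩ : ∃ a : ℕ, k - j = 2*a := ⟨(k-j)/2, by omega⟩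
    refine ⟨a, ?_⟩
    have h4 : (k:ℤ) - j = 2*a := by omega
    have heq' : (∑ i ∈ Finset.range k, e i) = (∑ i ∈ Finset.range j, e i) := heq
    rw [h4]
    linear_combination heq'
  have Dodd : ∀ j k : ℕ, j < k → k < j + 2*m → (k - j) % 2 = 1 →
      E k - E j ≠ m ∧ E j - E k ≠ m := by
    intro j k h1 h2 h3
    constructor
    · intro heq
      apply hD j k h1 h2
      obtain ⟨a, ha⟩ : ∃ a : ℕ, k - j = 2*a + 1 := ⟨(k-j)/2, by omega⟩
      refine ⟨a + 1, ?_⟩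
      have h5 : (k:ℤ) - j = 2*a+1 := by omega
      have h6 : (∑ i ∈ Finset.range k, e i) - (∑ i ∈ Finset.range j, e i) = m := heq
      rw [h5]
      linear_combination h6
    · intro heq
      apply hD j k h1 h2
      obtain ⟨a, ha⟩ : ∃ a : ℕ, k - j = 2*a + 1 := ⟨(k-j)/2, by omega⟩
      refine ⟨a, ?_⟩
      have h5 : (k:ℤ) - j = 2*a+1 := by omega
      have h6 : (∑ i ∈ Finset.range j, e i) - (∑ i ∈ Finset.range k, e i) = m := heq
      rw [h5]
      linear_combination -h6
  have L1 : ∀ k, E (k+2) ≠ E k := by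
    intro k
    exact Deven k (k+2) (by omega) (by omega) (by omega)
  have hL1' : ∀ k, e k + e (k+1) ≠ 0 := by
    intro k h
    apply L1 k
    rw [hEsucc, hEsucc]; omega
  -- bound on increments
  have hbd : ∀ j d : ℕ, |E (j + d) - E j| ≤ (d:ℤ) := by
    intro j d
    induction d with
    | zero => simp
    | succ d ih =>
      have h1 : j + (d+1) = (j + d) + 1 := by omega
      have hih := abs_le.mp ih
      rw [h1, hEsucc, abs_le]
      rcases he (j+d) with h | h | h <;> rw [h] <;> push_cast <;> omega
  -- min and max over a period window
  obtain ⟨a, haw, hamin⟩ := Finset.exists_min_image (Finset.range (2*m)) E ⟨0, by simp; omega⟩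
  obtain ⟨b, hbw, hbmax⟩ := Finset.exists_max_image (Finset.range (2*m)) E ⟨0, by simp; omega⟩
  rw [Finset.mem_range] at haw hbw
  have hming : ∀ k, E a ≤ E k := by
    intro k
    rw [hEmod k]
    exact hamin _ (Finset.mem_range.mpr (Nat.mod_lt _ (by omega)))
  have hmaxg : ∀ k, E k ≤ E b := by
    intro k
    rw [hEmod k]
    exact hbmax _ (Finset.mem_range.mpr (Nat.mod_lt _ (by omega)))
  -- the range is at most m
  have hle : E b - E a ≤ (m:ℤ) := by
    rcases Nat.le_total a b with hab | hab
    · have h1 := hbd a (b - a)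
      have h2 := hbd b (a + 2*m - b)
      rw [show a + (b-a) = b by omega] at h1
      rw [show b + (a + 2*m - b) = a + 2*m by omega, hEper] at h2
      have h3 := abs_le.mp h1
      have h4 := abs_le.mp h2
      push_cast at h3 h4
      omega
    · have h1 := hbd b (a - b)
      have h2 := hbd a (b + 2*m - a)
      rw [show b + (a-b) = a by omega] at h1
      rw [show a + (b + 2*m - a) = b + 2*m by omega, hEper] at h2
      have h3 := abs_le.mp h1
      have h4 := abs_le.mp h2
      push_cast at h3 h4
      omega
  -- pigeonhole device
  have pigeon : ∀ q lo hi : ℤ, q < 2 → (∀ i, i < m → lo ≤ E (2*i + q.toNat) ∧ E (2*i + q.toNat) ≤ hi) →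
      (m:ℤ) ≤ hi - lo + 1 := by
    intro q lo hi hq hbound
    have hinj : Set.InjOn (fun i => E (2*i + q.toNat)) (Finset.range m) := by
      intro i hi1 j hj1 hij
      simp only [Finset.coe_sort_coe, Finset.mem_coe, Finset.mem_range] at hi1 hj1
      by_contra hne
      rcases Nat.lt_or_ge i j with h | h
      · exact Deven (2*i + q.toNat) (2*j + q.toNat) (by omega) (by omega) (by omega) hij.symm
      · have h' : j < i := by omega
        exact Deven (2*j + q.toNat) (2*i + q.toNat) (by omega) (by omega) (by omega) hij
    have hmaps : ∀ i ∈ Finset.range m, (fun i => E (2*i + q.toNat)) i ∈ Finset.Icc lo hi := by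
      intro i hi1
      rw [Finset.mem_range] at hi1
      rw [Finset.mem_Icc]
      exact hbound i hi1
    have hcard := Finset.card_le_card_of_injOn _ hmaps hinj
    rw [Finset.card_range, Int.card_Icc] at hcard
    omega
  have hge : (m:ℤ) - 1 ≤ E b - E a := by
    have := pigeon 0 (E a) (E b) (by omega) (by
      intro i hi1
      simp only [Int.toNat_zero, Nat.add_zero]
      exact ⟨hming _, hmaxg _⟩)
    omega
  have hne : E b - E a ≠ (m:ℤ) := by
    intro hEq
    -- all min/max attainers share a parity
    have hpar : b % 2 = a % 2 := by
      by_contra hp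
      rcases Nat.lt_trichotomy a b with h | h | h
      · exact (Dodd a b h (by omega) (by omega)).1 hEq
      · rw [h] at hEq; omega
      · exact (Dodd b a h (by omega) (by omega)).2 hEq
    set q : ℕ := 1 - a % 2 with hqdef
    have hq2 : q < 2 := by omega
    have hqa : q % 2 ≠ a % 2 := by omega
    have hmid : ∀ i, i < m → E a + 1 ≤ E (2*i + q) ∧ E (2*i + q) ≤ E b - 1 := by
      intro i hi1
      set k := 2*i + q with hk
      have hk2 : k < 2*m := by omega
      have h1 : E k ≠ E a := by
        intro hEk
        rcases Nat.lt_trichotomy k b with h | h | h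
        · exact (Dodd k b h (by omega) (by omega)).1 (by omega)
        · omega
        · exact (Dodd b k h (by omega) (by omega)).2 (by omega)
      have h2 : E k ≠ E b := by
        intro hEk
        rcases Nat.lt_trichotomy a k with h | h | h
        · exact (Dodd a k h (by omega) (by omega)).1 (by omega)
        · omega
        · exact (Dodd k a h (by omega) (by omega)).2 (by omega)
      have := hming k
      have := hmaxg k
      omega
    have := pigeon q (E a + 1) (E b - 1) (by omega) (by
      intro i hi1
      have h2 : (q:ℤ).toNat = q := by omega
      rw [h2]
      exact hmid i hi1)
    omega
  have hMc : E b - E a = (m:ℤ) - 1 := by omega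
  have hba : E b ≠ E a := by omega
  -- plateau at the minimum
  obtain ⟨α, hα1, hα2, hαlo, hαhi⟩ :
      ∃ α, E α = E a ∧ E (α+1) = E a ∧ 2*m - 1 ≤ α ∧ α ≤ a + 2*m := by
    have hEA : E (a + 2*m) = E a := hEper a
    have hA1 : E (a + 2*m + 1) ≠ E (a + 2*m - 1) := by
      have h := L1 (a + 2*m - 1)
      rw [show a + 2*m - 1 + 2 = a + 2*m + 1 by omega] at h
      exact h
    have hs1 := abs_le.mp (hstep1 (a + 2*m))
    have hs0 := abs_le.mp (hstep1 (a + 2*m - 1))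
    rw [show a + 2*m - 1 + 1 = a + 2*m by omega] at hs0
    have hg1 := hming (a + 2*m + 1)
    have hg0 := hming (a + 2*m - 1)
    by_cases hc : E (a + 2*m + 1) = E a
    · exact ⟨a + 2*m, hEA, hc, by omega, le_refl _⟩
    · have h2 : E (a + 2*m - 1) = E a := by omega
      exact ⟨a + 2*m - 1, h2, by rw [show a + 2*m - 1 + 1 = a + 2*m by omega]; exact hEA,
        by omega, by omega⟩
  have humin : ∀ k, α ≤ k → k < α + 2*m → E k = E a → k = α ∨ k = α + 1 := by
    intro k h1 h2 h3
    by_contra hk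
    push_neg at hk
    rcases Nat.even_or_odd (k + α) with ⟨c, hc⟩ | ⟨c, hc⟩
    · exact Deven α k (by omega) (by omega) (by omega) (by rw [h3, hα1])
    · exact Deven (α+1) k (by omega) (by omega) (by omega) (by rw [h3, hα2])
  -- a maximum attainer in the window above α
  obtain ⟨b', hb'E, hb'lo, hb'hi⟩ : ∃ b', E b' = E b ∧ α + 2 ≤ b' ∧ b' < α + 2*m := by
    have h2m : E (b + 2*m) = E b := hEper b
    have h4m : E (b + 4*m) = E b := by
      rw [show b + 4*m = (b + 2*m) + 2*m by ring, hEper, hEper]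
    have hne1 : b + 2*m ≠ α := by intro h; rw [← h, h2m] at hα1; exact hba hα1
    have hne2 : b + 2*m ≠ α + 1 := by
      intro h; rw [← h, h2m] at hα2; exact hba hα2
    have hne3 : b + 4*m ≠ α + 1 := by
      intro h; rw [← h, h4m] at hα2; exact hba hα2
    have hαb : α ≤ 4*m - 1 := by omega
    have hne0 : b ≠ α := fun h => hba (by rw [h, hα1])
    by_cases hc : α + 2 ≤ b + 2*m
    · exact ⟨b + 2*m, h2m, hc, by omega⟩
    · have hx1 : b + 2*m ≤ α - 1 := by omega
      have hx2 : α + 2 ≤ b + 4*m := by omega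
      exact ⟨b + 4*m, h4m, hx2, by omega⟩
  obtain ⟨β, hβ1, hβ2, hβlo, hβhi⟩ :
      ∃ β, E β = E b ∧ E (β+1) = E b ∧ α + 2 ≤ β ∧ β + 1 ≤ α + 2*m - 1 := by
    have hB1 : E (b' + 1) ≠ E (b' - 1) := by
      have h := L1 (b' - 1)
      rw [show b' - 1 + 2 = b' + 1 by omega] at h
      exact h
    have hs1 := abs_le.mp (hstep1 b')
    have hs0 := abs_le.mp (hstep1 (b' - 1))
    rw [show b' - 1 + 1 = b' by omega] at hs0
    have hg1 := hmaxg (b' + 1)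
    have hg0 := hmaxg (b' - 1)
    have hwrap : E (α + 2*m) = E a := by rw [hEper]; exact hα1
    by_cases hc : E (b' + 1) = E b
    · refine ⟨b', hb'E, hc, hb'lo, ?_⟩
      by_contra hh
      have : b' + 1 = α + 2*m := by omega
      rw [this, hwrap] at hc
      exact hba hc.symm
    · have h2 : E (b' - 1) = E b := by omega
      refine ⟨b' - 1, h2, by rw [show b' - 1 + 1 = b' by omega]; exact hb'E, ?_, by omega⟩
      by_contra hh
      have : b' - 1 = α + 1 := by omega
      rw [this, hα2] at h2
      exact hba h2.symm
  have humax : ∀ k, α ≤ k → k < α + 2*m → E k = E b → k = β ∨ k = β + 1 := by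
    intro k h1 h2 h3
    by_contra hk
    push_neg at hk
    rcases Nat.even_or_odd (k + β) with ⟨c, hc⟩ | ⟨c, hc⟩
    · rcases Nat.lt_trichotomy k β with h | h | h
      · exact Deven k β (by omega) (by omega) (by omega) (by rw [h3, hβ1])
      · exact hk.1 h
      · exact Deven β k (by omega) (by omega) (by omega) (by rw [h3, hβ1])
    · rcases Nat.lt_trichotomy k (β+1) with h | h | h
      · exact Deven k (β+1) (by omega) (by omega) (by omega) (by rw [h3, hβ2])
      · exact hk.2 h
      · exact Deven (β+1) k (by omega) (by omega) (by omega) (by rw [h3, hβ2])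
  have hwrap : E (α + 2*m) = E a := by rw [hEper]; exact hα1
  -- zero steps happen only at α and β
  have hzero : ∀ k, α ≤ k → k < α + 2*m → e k = 0 → k = α ∨ k = β := by
    intro k hk1 hk2 hek
    have hv : E (k+1) = E k := by rw [hEsucc]; omega
    by_cases hvc : E k = E a
    · left
      rcases humin k hk1 hk2 hvc with h | h
      · exact h
      · exfalso
        have h2 : E (α + 2) = E a := by rw [show α + 2 = k + 1 by omega, hv, hvc]
        rcases humin (α+2) (by omega) (by omega) h2 with h3 | h3 <;> omega
    · by_cases hvM : E k = E b
      · right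
        rcases humax k hk1 hk2 hvM with h | h
        · exact h
        · exfalso
          by_cases hlast : β + 2 < α + 2*m
          · have h2 : E (β + 2) = E b := by rw [show β + 2 = k + 1 by omega, hv, hvM]
            rcases humax (β+2) (by omega) (by omega) h2 with h3 | h3 <;> omega
          · have h2 : k + 1 = α + 2*m := by omega
            rw [h2, hwrap] at hv
            rw [← hv] at hvM
            exact hba hvM.symm
      · exfalso
        have hlt1 := hming k
        have hlt2 := hmaxg k
        have hklo : α + 2 ≤ k := by
          have hne1 : k ≠ α := fun h => hvc (by rw [h, hα1])
          have hne2 : k ≠ α + 1 := fun h => hvc (by rw [h, hα2])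
          omega
        have hkhi : k + 1 ≤ α + 2*m - 1 := by
          by_contra hh
          have : k + 1 = α + 2*m := by omega
          rw [this, hwrap] at hv
          exact hvc (by omega)
        obtain ⟨p, hp1, hp2, hp3⟩ := ivt E hstep1 (α+1) β (E k) (by omega)
          (Or.inl ⟨by rw [hα2]; omega, by rw [hβ1]; omega⟩)
        obtain ⟨qq, hq1, hq2, hq3⟩ := ivt E hstep1 (β+1) (α + 2*m) (E k) (by omega)
          (Or.inr ⟨by rw [hwrap]; omega, by rw [hβ2]; omega⟩)
        have hpne1 : p ≠ α + 1 := by intro h; rw [h, hα2] at hp3; exact hvc hp3.symm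
        have hpne2 : p ≠ β := by intro h; rw [h, hβ1] at hp3; exact hvM hp3.symm
        have hqne1 : qq ≠ β + 1 := by intro h; rw [h, hβ2] at hq3; exact hvM hq3.symm
        have hqne2 : qq ≠ α + 2*m := by intro h; rw [h, hwrap] at hq3; exact hvc hq3.symm
        have hmem : ∀ x, α + 1 ≤ x → x ≤ α + 2*m - 1 → E x = E k → x = k ∨ x = k + 1 := by
          intro x hx1 hx2 hx3
          by_contra hx
          push_neg at hx
          rcases Nat.even_or_odd (x + k) with ⟨c, hc⟩ | ⟨c, hc⟩
          · rcases Nat.lt_trichotomy x k with h | h | h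
            · exact Deven x k (by omega) (by omega) (by omega) (by rw [hx3])
            · exact hx.1 h
            · exact Deven k x (by omega) (by omega) (by omega) (by rw [hx3])
          · rcases Nat.lt_trichotomy x (k+1) with h | h | h
            · exact Deven x (k+1) (by omega) (by omega) (by omega) (by rw [hx3, ← hv])
            · exact hx.2 h
            · exact Deven (k+1) x (by omega) (by omega) (by omega) (by rw [hx3, ← hv])
        have hpk := hmem p (by omega) (by omega) hp3
        have hqk := hmem qq (by omega) (by omega) hq3
        omega
  -- upward arc
  have hstep2 : ∀ k, α < k → k + 1 < β → e (k+1) = e k := by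
    intro k h1 h2
    have ha1 : e k ≠ 0 := by
      intro h
      rcases hzero k (by omega) (by omega) h with h3 | h3 <;> omega
    have ha2 : e (k+1) ≠ 0 := by
      intro h
      rcases hzero (k+1) (by omega) (by omega) h with h3 | h3 <;> omega
    have := hL1' k
    rcases he k with h | h | h <;> rcases he (k+1) with h' | h' | h' <;> omega
  have hconstup : ∀ k, α < k → k < β → e k = e (α+1) := by
    have key : ∀ i, α+1+i < β → e (α+1+i) = e (α+1) := by
      intro i
      induction i with
      | zero => intro _; rfl
      | succ i ih =>
        intro hi
        have h1 : e (α+1+i+1) = e (α+1+i) := hstep2 (α+1+i) (by omega) (by omega)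
        rw [show α+1+(i+1) = α+1+i+1 by omega, h1]
        exact ih (by omega)
    intro k h1 h2
    have := key (k - (α+1)) (by omega)
    rw [show α+1+(k-(α+1)) = k by omega] at this
    exact this
  have hβm : β = α + m ∧ e (α+1) = 1 := by
    have hsub : E β - E (α+1) = ∑ i ∈ Finset.Ico (α+1) β, e i := by
      rw [hE]
      rw [Finset.sum_Ico_eq_sub _ (by omega : α+1 ≤ β)]
    have hcongr : ∑ i ∈ Finset.Ico (α+1) β, e i = ∑ _i ∈ Finset.Ico (α+1) β, e (α+1) := by
      apply Finset.sum_congr rfl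
      intro i hi
      rw [Finset.mem_Ico] at hi
      rcases Nat.eq_or_lt_of_le hi.1 with h | h
      · rw [← h]
      · exact hconstup i (by omega) hi.2
    rw [hcongr, Finset.sum_const, Nat.card_Ico, nsmul_eq_mul] at hsub
    rw [hβ1, hα2] at hsub
    have hcast : ((β - (α+1) : ℕ) : ℤ) = (β:ℤ) - α - 1 := by omega
    rw [hcast] at hsub
    rcases he (α+1) with h | h | h <;> rw [h] at hsub
    · exfalso; omega
    · exfalso; omega
    · constructor
      · omega
      · exact h
  obtain ⟨hβm, hup1⟩ := hβm
  have hup : ∀ k, α < k → k < α + m → e k = 1 := by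
    intro k h1 h2
    rw [hconstup k h1 (by omega), hup1]
  -- downward arc
  have hstep3 : ∀ k, β < k → k + 1 < α + 2*m → e (k+1) = e k := by
    intro k h1 h2
    have ha1 : e k ≠ 0 := by
      intro h
      rcases hzero k (by omega) (by omega) h with h3 | h3 <;> omega
    have ha2 : e (k+1) ≠ 0 := by
      intro h
      rcases hzero (k+1) (by omega) (by omega) h with h3 | h3 <;> omega
    have := hL1' k
    rcases he k with h | h | h <;> rcases he (k+1) with h' | h' | h' <;> omega
  have hconstdn : ∀ k, β < k → k < α + 2*m → e k = e (β+1) := by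
    have key : ∀ i, β+1+i < α + 2*m → e (β+1+i) = e (β+1) := by
      intro i
      induction i with
      | zero => intro _; rfl
      | succ i ih =>
        intro hi
        have h1 : e (β+1+i+1) = e (β+1+i) := hstep3 (β+1+i) (by omega) (by omega)
        rw [show β+1+(i+1) = β+1+i+1 by omega, h1]
        exact ih (by omega)
    intro k h1 h2
    have := key (k - (β+1)) (by omega)
    rw [show β+1+(k-(β+1)) = k by omega] at this
    exact this
  have hdn1 : e (β+1) = -1 := by
    have hsub : E (α+2*m) - E (β+1) = ∑ i ∈ Finset.Ico (β+1) (α+2*m), e i := by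
      rw [hE]
      rw [Finset.sum_Ico_eq_sub _ (by omega : β+1 ≤ α+2*m)]
    have hcongr : ∑ i ∈ Finset.Ico (β+1) (α+2*m), e i
        = ∑ _i ∈ Finset.Ico (β+1) (α+2*m), e (β+1) := by
      apply Finset.sum_congr rfl
      intro i hi
      rw [Finset.mem_Ico] at hi
      rcases Nat.eq_or_lt_of_le hi.1 with h | h
      · rw [← h]
      · exact hconstdn i (by omega) hi.2
    rw [hcongr, Finset.sum_const, Nat.card_Ico, nsmul_eq_mul] at hsub
    rw [hwrap, hβ2] at hsub
    have hcast : ((α + 2*m - (β+1) : ℕ) : ℤ) = (m:ℤ) - 1 := by omega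
    rw [hcast] at hsub
    rcases he (β+1) with h | h | h <;> rw [h] at hsub <;> first | exact h | (exfalso; omega)
  have hdn : ∀ k, α + m < k → k < α + 2*m → e k = -1 := by
    intro k h1 h2
    rcases Nat.eq_or_lt_of_le (show β + 1 ≤ k by omega) with h | h
    · rw [← h]; exact hdn1
    · rw [hconstdn k (by omega) h2]; exact hdn1
  have hz1 : e α = 0 := by
    have := hEsucc α
    rw [hα1, hα2] at this; omega
  have hz2 : e β = 0 := by
    have := hEsucc β
    rw [hβ1, hβ2] at this; omega
  -- the window values match the pattern
  have hwin : ∀ i, i < 2*m → e (α + i) = pat m i := by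
    intro i hi
    rw [pat_eval hi]
    split_ifs with h1 h2 h3
    · rw [h1]; exact hz1
    · exact hup (α+i) (by omega) (by omega)
    · rw [h3, ← hβm]; exact hz2
    · exact hdn (α+i) (by omega) (by omega)
  refine ⟨α, fun i => ?_⟩
  have hmod : (α + i) % (2*m) = (α + i % (2*m)) % (2*m) := by
    conv_lhs => rw [Nat.add_mod]
    conv_rhs => rw [Nat.add_mod, Nat.mod_mod_of_dvd i dvd_rfl]
  rw [hecong (α + i) (α + i % (2*m)) hmod, hwin (i % (2*m)) (Nat.mod_lt _ (by omega)),
    pat_mod]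






def sol (n m : ℕ) (t : ZMod n) : Fin n → ZMod n :=
  fun k => sg n m (t + (k.val : ZMod n)) - sg n m t + 1

def conSol (n c : ℕ) : Fin n → ZMod n :=
  fun k => 1 + (k.val : ZMod n) * (c : ZMod n)

variable {n m : ℕ}

section
variable [NeZero n] (hm : 3 ≤ m) (hn : n = 2*m)
include hm hn

lemma sg_step_val (x : ZMod n) :
    (sg n m (x+1) - sg n m x).val = ((m:ℤ) + pat m x.val).toNat ∧
    ((sg n m (x+1) - sg n m x).val = m - 1 ∨ (sg n m (x+1) - sg n m x).val = m ∨
      (sg n m (x+1) - sg n m x).val = m + 1) := by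
  have hd : sg n m (x+1) - sg n m x = (m : ZMod n) + ((pat m x.val : ℤ) : ZMod n) := by
    rw [sg_step hm hn]; ring
  rcases pat_mem m x.val with h | h | h <;> rw [h] at hd ⊢
  · have h2 : sg n m (x+1) - sg n m x = ((m - 1 : ℕ) : ZMod n) := by
      rw [hd]
      push_cast [Nat.cast_sub (show 1 ≤ m by omega)]
      ring
    rw [h2, ZMod.val_natCast_of_lt (by omega)]
    omega
  · have h2 : sg n m (x+1) - sg n m x = ((m : ℕ) : ZMod n) := by
      rw [hd]; push_cast; ring
    rw [h2, ZMod.val_natCast_of_lt (by omega)]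
    omega
  · have h2 : sg n m (x+1) - sg n m x = ((m + 1 : ℕ) : ZMod n) := by
      rw [hd]; push_cast; ring
    rw [h2, ZMod.val_natCast_of_lt (by omega)]
    omega

lemma sol_zero (t : ZMod n) (h0 : (0:ℕ) < n) : sol n m t ⟨0, h0⟩ = 1 := by
  unfold sol
  simp

lemma sol_inj (t : ZMod n) : Function.Injective (sol n m t) := by
  intro k k' h
  unfold sol at h
  have h2 : sg n m (t + (k.val : ZMod n)) = sg n m (t + (k'.val : ZMod n)) := by
    linear_combination h
  have h3 := sg_inj hm hn h2
  have h4 : (k.val : ZMod n) = (k'.val : ZMod n) := by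
    exact add_left_cancel h3
  have h5 : k.val % n = k'.val % n := by
    have := congrArg ZMod.val h4
    rwa [ZMod.val_natCast, ZMod.val_natCast] at this
  exact Fin.ext (by rw [← Nat.mod_eq_of_lt k.isLt, ← Nat.mod_eq_of_lt k'.isLt]; exact h5)

lemma sol_step_cond (t : ZMod n) (j : ℕ) (hj : j + 1 < n) :
    m - 1 ≤ zdist (sol n m t ⟨j+1, hj⟩) (sol n m t ⟨j, Nat.lt_of_succ_lt hj⟩) := by
  rw [zdist_iff hm hn]
  have hd : sol n m t ⟨j+1, hj⟩ - sol n m t ⟨j, Nat.lt_of_succ_lt hj⟩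
      = sg n m ((t + (j : ZMod n)) + 1) - sg n m (t + (j : ZMod n)) := by
    unfold sol
    push_cast
    ring
  rw [hd]
  exact (sg_step_val hm hn _).2

lemma sol_wrap_cond (t : ZMod n) (h0 : (0:ℕ) < n) (h1 : n - 1 < n) :
    m - 1 ≤ zdist (sol n m t ⟨0, h0⟩) (sol n m t ⟨n-1, h1⟩) := by
  rw [zdist_iff hm hn]
  have hone : ((n - 1 : ℕ) : ZMod n) + 1 = 0 := by
    have : ((n - 1 : ℕ) : ZMod n) + 1 = ((n - 1 + 1 : ℕ) : ZMod n) := by push_cast; ring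
    rw [this, show n - 1 + 1 = n by omega, ZMod.natCast_self]
  have hd : sol n m t ⟨0, h0⟩ - sol n m t ⟨n-1, h1⟩
      = sg n m ((t + ((n-1 : ℕ) : ZMod n)) + 1) - sg n m (t + ((n-1 : ℕ) : ZMod n)) := by
    unfold sol
    rw [add_assoc, hone]
    push_cast
    ring
  rw [hd]
  exact (sg_step_val hm hn _).2

end







-- new small lemmas
lemma percong {p : ℕ} (f : ℕ → ℤ) (hper : ∀ j, f (j + p) = f j) {j j' : ℕ}
    (h : j % p = j' % p) : f j = f j' := by
  have h1 : ∀ q k, f (k + p*q) = f k := by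
    intro q
    induction q with
    | zero => simp
    | succ q ih =>
      intro k
      rw [show k + p*(q+1) = (k + p*q) + p by ring, hper, ih]
  have hj : f j = f (j % p) := by
    conv_lhs => rw [← Nat.mod_add_div j p, h1]
  have hj' : f j' = f (j' % p) := by
    conv_lhs => rw [← Nat.mod_add_div j' p, h1]
  rw [hj, hj', h]

lemma absEbd (e : ℕ → ℤ) (he : ∀ j, e j = -1 ∨ e j = 0 ∨ e j = 1) (k : ℕ) :
    |∑ j ∈ Finset.range k, e j| ≤ (k:ℤ) := by
  induction k with
  | zero => simp
  | succ k ih =>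
    rw [Finset.sum_range_succ]
    have h1 := abs_le.mp ih
    rw [abs_le]
    rcases he k with h | h | h <;> rw [h] <;> push_cast <;> omega

variable {n m : ℕ}

section
variable [NeZero n] (hm : 3 ≤ m) (hn : n = 2*m)
include hm hn

-- ℕ-indexed version of sol
lemma gsol_eq (t : ZMod n) (k : ℕ) (hk : k < n) :
    sg n m (t + (k : ZMod n)) - sg n m t + 1 = sol n m t ⟨k, hk⟩ := rfl

lemma gsol_step (t : ZMod n) (k : ℕ) :
    (sg n m (t + ((k+1 : ℕ) : ZMod n)) - sg n m t + 1)
      = (sg n m (t + (k : ZMod n)) - sg n m t + 1)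
        + (m : ZMod n) + ((pat m ((t + (k : ZMod n)).val) : ℤ) : ZMod n) := by
  have h1 : t + ((k+1 : ℕ) : ZMod n) = (t + (k : ZMod n)) + 1 := by push_cast; ring
  rw [h1, sg_step hm hn]
  ring

-- injectivity of t ↦ sol t, and distinctness from constants
lemma sol_param_inj : Function.Injective (sol n m : ZMod n → (Fin n → ZMod n)) := by
  intro t t' h
  have hfun : ∀ k : ℕ, sg n m (t + (k : ZMod n)) - sg n m t
      = sg n m (t' + (k : ZMod n)) - sg n m t' := by
    intro k
    have h1 : ((k : ℕ) : ZMod n) = ((k % n : ℕ) : ZMod n) := (ZMod.natCast_mod k n).symm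
    have h2 := congrFun h ⟨k % n, Nat.mod_lt _ (by omega)⟩
    unfold sol at h2
    simp only at h2
    rw [h1]
    linear_combination h2
  have hpat : ∀ x : ZMod n, pat m x.val = pat m ((x + (t' - t)).val) := by
    intro x
    set k := (x - t).val with hk
    have hx : t + ((k : ℕ) : ZMod n) = x := by rw [hk, natCast_val_self]; ring
    have hx' : t' + ((k : ℕ) : ZMod n) = x + (t' - t) := by rw [hk, natCast_val_self]; ring
    have hs1 := gsol_step hm hn t k
    have hs2 := gsol_step hm hn t' k
    rw [hfun k, hfun (k+1)] at hs1
    have h3 : ((pat m ((t + (k:ZMod n)).val) : ℤ) : ZMod n)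
        = ((pat m ((t' + (k:ZMod n)).val) : ℤ) : ZMod n) := by
      linear_combination hs2 - hs1
    rw [hx, hx'] at h3
    have h4 : (n:ℤ) ∣ (pat m x.val - pat m ((x + (t' - t)).val)) := by
      rw [← ZMod.intCast_zmod_eq_zero_iff_dvd]
      push_cast
      linear_combination h3
    have h5 := pat_mem m x.val
    have h6 := pat_mem m ((x + (t' - t)).val)
    have := int_dvd_small h4 (by omega) (by omega)
    omega
  set δ := t' - t with hδ
  have hδval : δ.val < 2*m := by have := ZMod.val_lt δ; omega
  have h0 : pat m δ.val = 0 := by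
    have := hpat 0
    rw [ZMod.val_zero, zero_add] at this
    rw [← this, pat_eval (by omega)]
    simp
  have hδ0 : δ.val = 0 ∨ δ.val = m := by
    rw [pat_eval hδval] at h0
    split_ifs at h0 <;> simp_all <;> omega
  have hfinal : δ.val = 0 := by
    rcases hδ0 with h | h
    · exact h
    · exfalso
      have hδm : δ = ((m : ℕ) : ZMod n) := by
        rw [← natCast_val_self δ, h]
      have hone : (1 : ZMod n) = ((1:ℕ) : ZMod n) := by push_cast; rfl
      have hv1 : (1 : ZMod n).val = 1 := by
        rw [hone, ZMod.val_natCast_of_lt (by omega)]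
      have hvm1 : ((1 : ZMod n) + δ).val = m + 1 := by
        rw [hδm, hone]
        have : ((1:ℕ) : ZMod n) + ((m:ℕ) : ZMod n) = ((1 + m : ℕ) : ZMod n) := by push_cast; ring
        rw [this, ZMod.val_natCast_of_lt (by omega)]
        omega
      have := hpat 1
      rw [hv1, hvm1, pat_eval (show 1 < 2*m by omega), pat_eval (show m+1 < 2*m by omega)] at this
      simp only [if_neg (by omega : ¬(1:ℕ) = 0), if_pos (by omega : 1 < m),
        if_neg (by omega : ¬(m+1 = 0)), if_neg (by omega : ¬(m+1 < m)),
        if_neg (by omega : ¬(m+1 = m))] at this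
      omega
  have hz : δ = 0 := by
    rw [← natCast_val_self δ, hfinal]
    simp
  have : t' - t = 0 := by rw [← hδ]; exact hz
  exact (sub_eq_zero.mp this).symm

lemma conSol_inj (c : ℕ) (hco : Nat.Coprime c n) : Function.Injective (conSol n c) := by
  intro k k' h
  unfold conSol at h
  have h2 : (k.val : ZMod n) * (c : ZMod n) = (k'.val : ZMod n) * (c : ZMod n) := by
    linear_combination h
  have hu : IsUnit ((c:ℕ) : ZMod n) := ⟨ZMod.unitOfCoprime c hco, ZMod.coe_unitOfCoprime c hco⟩
  have h3 := hu.mul_right_cancel h2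
  have h5 : k.val % n = k'.val % n := by
    have := congrArg ZMod.val h3
    rwa [ZMod.val_natCast, ZMod.val_natCast] at this
  exact Fin.ext (by rw [← Nat.mod_eq_of_lt k.isLt, ← Nat.mod_eq_of_lt k'.isLt]; exact h5)

lemma conSol_step (c : ℕ) (hcn : c < n) (hcval : c = m - 1 ∨ c = m + 1)
    (j : ℕ) (hj : j + 1 < n) :
    m - 1 ≤ zdist (conSol n c ⟨j+1, hj⟩) (conSol n c ⟨j, Nat.lt_of_succ_lt hj⟩) := by
  rw [zdist_iff hm hn]
  have hd : conSol n c ⟨j+1, hj⟩ - conSol n c ⟨j, Nat.lt_of_succ_lt hj⟩ = ((c:ℕ) : ZMod n) := by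
    unfold conSol
    simp only
    push_cast
    ring
  rw [hd, ZMod.val_natCast_of_lt hcn]
  omega

lemma conSol_wrap (c : ℕ) (hcn : c < n) (hcval : c = m - 1 ∨ c = m + 1)
    (h0 : (0:ℕ) < n) (h1 : n - 1 < n) :
    m - 1 ≤ zdist (conSol n c ⟨0, h0⟩) (conSol n c ⟨n-1, h1⟩) := by
  rw [zdist_iff hm hn]
  have hcast : ((n-1 : ℕ) : ZMod n) = -1 := by
    have h2 : ((n-1 : ℕ) : ZMod n) + 1 = ((n-1+1 : ℕ) : ZMod n) := by push_cast; ring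
    have h3 : ((n-1+1 : ℕ) : ZMod n) = 0 := by rw [show n-1+1 = n by omega, ZMod.natCast_self]
    linear_combination h2 + h3
  have hd : conSol n c ⟨0, h0⟩ - conSol n c ⟨n-1, h1⟩ = ((c:ℕ) : ZMod n) := by
    unfold conSol
    simp only
    rw [hcast]
    push_cast
    ring
  rw [hd, ZMod.val_natCast_of_lt hcn]
  omega

lemma conSol_zero (c : ℕ) (h0 : (0:ℕ) < n) : conSol n c ⟨0, h0⟩ = 1 := by
  unfold conSol
  simp

lemma sol_ne_con (t : ZMod n) (c : ℕ) (hcm : c ≠ m) (hcn : c < n) :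
    sol n m t ≠ conSol n c := by
  intro h
  have hfun : ∀ k : ℕ, sg n m (t + (k:ZMod n)) - sg n m t + 1
      = 1 + ((k:ZMod n)) * (c : ZMod n) := by
    intro k
    have h2 := congrFun h ⟨k % n, Nat.mod_lt _ (by omega)⟩
    unfold sol conSol at h2
    simp only at h2
    have h1 : ((k : ℕ) : ZMod n) = ((k % n : ℕ) : ZMod n) := (ZMod.natCast_mod k n).symm
    rw [h1]
    exact h2
  set k0 := (-t).val with hk0
  have hx : t + ((k0:ℕ) : ZMod n) = 0 := by rw [hk0, natCast_val_self]; ring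
  have hs := gsol_step hm hn t k0
  rw [hfun k0, hfun (k0+1), hx, ZMod.val_zero] at hs
  have hp0 : pat m 0 = 0 := by rw [pat_eval (by omega)]; simp
  rw [hp0] at hs
  have hceq : ((c:ℕ) : ZMod n) = ((m:ℕ) : ZMod n) := by
    push_cast at hs ⊢
    linear_combination hs
  have := congrArg ZMod.val hceq
  rw [ZMod.val_natCast_of_lt hcn, ZMod.val_natCast_of_lt (by omega)] at this
  exact hcm this

lemma conSol_ne : conSol n (m+1) ≠ conSol n (m-1) := by
  intro h
  have h2 := congrFun h ⟨1, by omega⟩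
  unfold conSol at h2
  simp only at h2
  have h3 : ((m+1 : ℕ) : ZMod n) = ((m-1 : ℕ) : ZMod n) := by
    push_cast at h2 ⊢
    linear_combination h2
  have := congrArg ZMod.val h3
  rw [ZMod.val_natCast_of_lt (by omega), ZMod.val_natCast_of_lt (by omega)] at this
  omega

end

end S10

open S10 in
theorem stmt10 (n : ℕ) [NeZero n] (hn : 6 ≤ n) (he : Even n) :
    {r : Fin n → ZMod n | Function.Injective r ∧ r 0 = 1 ∧
        (∀ j : ℕ, ∀ hj : j + 1 < n,
          n / 2 - 1 ≤ zdist (r ⟨j + 1, hj⟩) (r ⟨j, Nat.lt_of_succ_lt hj⟩)) ∧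
        n / 2 - 1 ≤ zdist (r 0) (r ⟨n - 1, by omega⟩)}.ncard
      = if n % 4 = 0 then n + 2 else n := by
  classical
  obtain ⟨w, hw⟩ := he
  have hpos : 0 < n := by omega
  set m := n / 2 with hmdef
  have hm3 : 3 ≤ m := by omega
  have hn2 : n = 2 * m := by omega
  have hfin0 : (0 : Fin n) = ⟨0, hpos⟩ := by
    ext; simp [Fin.val_zero n]
  set C : Set (Fin n → ZMod n) :=
    (if n % 4 = 0 then {conSol n (m+1), conSol n (m-1)} else ∅) with hCdef
  have hset : {r : Fin n → ZMod n | Function.Injective r ∧ r 0 = 1 ∧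
        (∀ j : ℕ, ∀ hj : j + 1 < n,
          m - 1 ≤ zdist (r ⟨j + 1, hj⟩) (r ⟨j, Nat.lt_of_succ_lt hj⟩)) ∧
        m - 1 ≤ zdist (r 0) (r ⟨n - 1, by omega⟩)}
      = Set.range (sol n m) ∪ C := by
    ext r
    simp only [Set.mem_setOf_eq, Set.mem_union, Set.mem_range]
    constructor
    · rintro ⟨hinj, h0, hstepc, hwrapc⟩
      -- the walk on ℕ
      set v : ℕ → ZMod n := fun k => r ⟨k % n, Nat.mod_lt _ hpos⟩ with hvdef
      have hv0 : v 0 = 1 := by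
        rw [hvdef]
        simp only
        rw [show (⟨0 % n, Nat.mod_lt _ hpos⟩ : Fin n) = 0 by rw [hfin0]; exact Fin.ext (by simp)]
        exact h0
      have hstepval : ∀ j : ℕ, ((v (j+1) - v j).val = m - 1 ∨ (v (j+1) - v j).val = m ∨
          (v (j+1) - v j).val = m + 1) := by
        intro j
        have hjm : j % n < n := Nat.mod_lt _ hpos
        have hsucc : (j+1) % n = (j % n + 1) % n := by
          rw [Nat.add_mod, Nat.mod_eq_of_lt (show 1 < n by omega)]
        rcases Nat.lt_or_ge (j % n + 1) n with hlt | hge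
        · have h2 : (j+1) % n = j % n + 1 := by rw [hsucc, Nat.mod_eq_of_lt hlt]
          have h3 := hstepc (j % n) hlt
          rw [zdist_iff hm3 hn2] at h3
          have h4 : v (j+1) = r ⟨j % n + 1, hlt⟩ := by
            rw [hvdef]; exact congrArg r (Fin.ext h2)
          have h5 : v j = r ⟨j % n, Nat.lt_of_succ_lt hlt⟩ := rfl
          rw [h4, h5]
          exact h3
        · have hj1 : j % n = n - 1 := by omega
          have h2 : (j+1) % n = 0 := by
            rw [hsucc, hj1, show n-1+1 = n by omega, Nat.mod_self]
          have h3 := hwrapc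
          rw [zdist_iff hm3 hn2] at h3
          have h4 : v (j+1) = r 0 := by
            rw [hvdef]
            refine congrArg r (Fin.ext ?_)
            rw [Fin.val_zero n]
            exact h2
          have h5 : v j = r ⟨n-1, by omega⟩ := by
            rw [hvdef]
            exact congrArg r (Fin.ext hj1)
          rw [h4, h5]
          exact h3
      set e : ℕ → ℤ := fun j => ((v (j+1) - v j).val : ℤ) - m with hedef
      have he' : ∀ j, e j = -1 ∨ e j = 0 ∨ e j = 1 := by
        intro j
        rcases hstepval j with h | h | h <;> rw [hedef] <;> simp only [h] <;> push_cast <;> omega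
      have hvper : ∀ k, v (k + n) = v k := by
        intro k
        rw [hvdef]
        exact congrArg r (Fin.ext (Nat.add_mod_right k n))
      have hper' : ∀ j, e (j + n) = e j := by
        intro j
        rw [hedef]
        simp only
        rw [show j + n + 1 = (j+1) + n by omega, hvper (j+1), hvper j]
      have hcastd : ∀ j, v (j+1) = v j + ((e j + m : ℤ) : ZMod n) := by
        intro j
        have h1 : (((v (j+1) - v j).val : ℕ) : ZMod n) = v (j+1) - v j := natCast_val_self _
        rw [hedef]
        simp only
        rw [show ((v (j+1) - v j).val : ℤ) - m + m = ((v (j+1) - v j).val : ℤ) by ring]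
        push_cast
        rw [h1]
        ring
      set E : ℕ → ℤ := fun k => ∑ i ∈ Finset.range k, e i with hEdef
      have hEsucc : ∀ k, E (k+1) = E k + e k := by
        intro k; rw [hEdef]; simp [Finset.sum_range_succ]
      have hrec : ∀ k, v k = 1 + (k : ZMod n) * (m : ZMod n) + ((E k : ℤ) : ZMod n) := by
        intro k
        induction k with
        | zero => rw [hv0]; rw [hEdef]; simp
        | succ k ih =>
          rw [hcastd k, ih, hEsucc k]
          push_cast
          ring
      have hD' : ∀ j k : ℕ, j < k → k < j + n →
          ¬ ((2*(m:ℤ)) ∣ ((k : ℤ) - (j : ℤ)) * (m:ℤ) + E k - E j) := by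
        intro j k h1 h2 hdvd
        have hne : v j ≠ v k := by
          intro hv
          have h3 := hinj hv
          have hmod : j % n = k % n := congrArg Fin.val h3
          have hdvd2 : n ∣ k - j := (Nat.modEq_iff_dvd' (le_of_lt h1)).mp hmod
          have := Nat.le_of_dvd (by omega) hdvd2
          omega
        apply hne
        rcases hdvd with ⟨c, hc⟩
        have hcast0 : (((j:ℤ) - k) * m + E j - E k : ℤ) = -((n:ℤ)) * c := by
          push_cast [hn2]
          linarith [hc]
        have hvjk : v j - v k = ((((j:ℤ) - k) * m + E j - E k : ℤ) : ZMod n) := by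
          rw [hrec j, hrec k]
          push_cast
          ring
        rw [hcast0] at hvjk
        have hz : ((((-(n:ℤ)) * c) : ℤ) : ZMod n) = 0 := by
          push_cast [ZMod.natCast_self]
          ring
        rw [hz] at hvjk
        exact sub_eq_zero.mp hvjk
      have hEnd : (n:ℤ) ∣ E n := by
        rw [← ZMod.intCast_zmod_eq_zero_iff_dvd]
        have h1 : v n = v 0 := by have := hvper 0; rwa [zero_add] at this
        rw [hrec n, hrec 0] at h1
        simp only [ZMod.natCast_self, Nat.cast_zero, zero_mul, add_zero] at h1
        have h2 : E 0 = 0 := by rw [hEdef]; simp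
        rw [h2] at h1
        push_cast at h1 ⊢
        linear_combination h1
      have hEn3 : E n = 0 ∨ E n = (n:ℤ) ∨ E n = -(n:ℤ) := by
        obtain ⟨c, hc⟩ := hEnd
        have habs := abs_le.mp (absEbd e he' n)
        rw [hEdef] at hc ⊢
        simp only at habs hc ⊢
        have hcb : c = 0 ∨ c = 1 ∨ c = -1 := by
          rcases lt_trichotomy c 0 with h | h | h
          · right; right
            by_contra hne2
            have : c ≤ -2 := by omega
            nlinarith
          · left; exact h
          · right; left
            by_contra hne2
            have : 2 ≤ c := by omega
            nlinarith
        rcases hcb with h | h | h <;> rw [h] at hc <;> simp at hc <;> omega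
      rcases hEn3 with hE0 | hEp | hEm
      · -- generic solutions
        left
        have hper2 : ∀ j, e (j + 2*m) = e j := by rw [← hn2]; exact hper'
        have hsum2 : (∑ j ∈ Finset.range (2*m), e j) = 0 := by rw [← hn2]; exact hE0
        have hD2 : ∀ j k : ℕ, j < k → k < j + 2*m →
            ¬ ((2*(m:ℤ)) ∣ ((k : ℤ) - (j : ℤ)) * (m:ℤ)
              + (∑ i ∈ Finset.range k, e i) - (∑ i ∈ Finset.range j, e i)) := by
          intro j k h1 h2
          exact hD' j k h1 (by omega)
        obtain ⟨cα, hcα⟩ := classify m hm3 e he' hper2 hsum2 hD2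
        set t : ZMod n := -((cα : ℕ) : ZMod n) with htdef
        have hkey : ∀ k : ℕ, v k = sg n m (t + (k : ZMod n)) - sg n m t + 1 := by
          intro k
          induction k with
          | zero => rw [hv0]; simp
          | succ k ih =>
            have hgs := gsol_step hm3 hn2 t k
            rw [hgs, ← ih]
            have hcast : ((cα + (t + (k:ZMod n)).val : ℕ) : ZMod n) = ((k:ℕ) : ZMod n) := by
              push_cast [natCast_val_self]
              rw [htdef]
              ring
            have hw2 : (cα + (t + (k:ZMod n)).val) % n = k % n := by
              have := congrArg ZMod.val hcast
              rwa [ZMod.val_natCast, ZMod.val_natCast] at this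
            have hek : e k = pat m ((t + (k:ZMod n)).val) := by
              rw [← hcα ((t + (k:ZMod n)).val)]
              exact (percong e hper' hw2).symm
            rw [hcastd k, hek]
            push_cast
            ring
        refine ⟨t, ?_⟩
        funext k
        have hvk : v k.val = r k := congrArg r (Fin.ext (Nat.mod_eq_of_lt k.isLt))
        rw [← hvk, hkey k.val]
        rfl
      · -- all steps are m+1
        right
        have hall : ∀ j, j < n → e j = 1 := by
          have hs0 : (∑ j ∈ Finset.range n, ((1:ℤ) - e j)) = 0 := by
            rw [Finset.sum_sub_distrib, Finset.sum_const, Finset.card_range]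
            have h5 : E n = (n:ℤ) := hEp
            rw [hEdef] at h5
            simp only at h5
            rw [h5]
            simp
          have hnn : ∀ i ∈ Finset.range n, (0:ℤ) ≤ 1 - e i := by
            intro i _
            rcases he' i with h | h | h <;> omega
          have hz := (Finset.sum_eq_zero_iff_of_nonneg hnn).mp hs0
          intro j hj
          have := hz j (Finset.mem_range.mpr hj)
          omega
        have hEk : ∀ k, k ≤ n → E k = (k:ℤ) := by
          intro k hk
          rw [hEdef]
          simp only
          rw [Finset.sum_congr rfl (fun i hi => hall i (by
            rw [Finset.mem_range] at hi; omega))]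
          simp
        have hmeven : m % 2 = 0 := by
          by_contra hodd
          obtain ⟨c, hc⟩ : ∃ c, m + 1 = 2*c := ⟨(m+1)/2, by omega⟩
          have hcint : (m:ℤ) + 1 = 2*(c:ℤ) := by push_cast; omega
          have hvm : v m = v 0 := by
            rw [hrec m, hrec 0, hEk m (by omega), hEk 0 (by omega)]
            have hmm : ((m:ℤ)*m + m) = (n:ℤ)*c := by
              rw [hn2]; push_cast; linear_combination (m:ℤ)*hcint
            have hc0 : ((((m:ℤ)*m + m) : ℤ) : ZMod n) = 0 := by
              rw [hmm]; push_cast [ZMod.natCast_self]; ring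
            push_cast at hc0 ⊢
            linear_combination hc0
          have h3 := hinj hvm
          have h4 : m % n = 0 % n := congrArg Fin.val h3
          rw [Nat.mod_eq_of_lt (by omega), Nat.zero_mod] at h4
          omega
        rw [hCdef, if_pos (by omega : n % 4 = 0)]
        refine Set.mem_insert_iff.mpr (Or.inl ?_)
        funext k
        have hvk : v k.val = r k := congrArg r (Fin.ext (Nat.mod_eq_of_lt k.isLt))
        rw [← hvk, hrec k.val, hEk k.val (le_of_lt k.isLt)]
        unfold conSol
        push_cast
        ring
      · -- all steps are m-1
        right
        have hall : ∀ j, j < n → e j = -1 := by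
          have hs0 : (∑ j ∈ Finset.range n, ((1:ℤ) + e j)) = 0 := by
            rw [Finset.sum_add_distrib, Finset.sum_const, Finset.card_range]
            have h5 : E n = -(n:ℤ) := hEm
            rw [hEdef] at h5
            simp only at h5
            rw [h5]
            simp
          have hnn : ∀ i ∈ Finset.range n, (0:ℤ) ≤ 1 + e i := by
            intro i _
            rcases he' i with h | h | h <;> omega
          have hz := (Finset.sum_eq_zero_iff_of_nonneg hnn).mp hs0
          intro j hj
          have := hz j (Finset.mem_range.mpr hj)
          omega
        have hEk : ∀ k, k ≤ n → E k = -(k:ℤ) := by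
          intro k hk
          rw [hEdef]
          simp only
          rw [Finset.sum_congr rfl (fun i hi => hall i (by
            rw [Finset.mem_range] at hi; omega))]
          simp
        have hmeven : m % 2 = 0 := by
          by_contra hodd
          obtain ⟨c, hc⟩ : ∃ c, m - 1 = 2*c := ⟨(m-1)/2, by omega⟩
          have hcint : (m:ℤ) - 1 = 2*(c:ℤ) := by push_cast; omega
          have hvm : v m = v 0 := by
            rw [hrec m, hrec 0, hEk m (by omega), hEk 0 (by omega)]
            have hmm : ((m:ℤ)*m - m) = (n:ℤ)*c := by
              rw [hn2]; push_cast; linear_combination (m:ℤ)*hcint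
            have hc0 : ((((m:ℤ)*m - m) : ℤ) : ZMod n) = 0 := by
              rw [hmm]; push_cast [ZMod.natCast_self]; ring
            push_cast at hc0 ⊢
            linear_combination hc0
          have h3 := hinj hvm
          have h4 : m % n = 0 % n := congrArg Fin.val h3
          rw [Nat.mod_eq_of_lt (by omega), Nat.zero_mod] at h4
          omega
        rw [hCdef, if_pos (by omega : n % 4 = 0)]
        refine Set.mem_insert_iff.mpr (Or.inr (Set.mem_singleton_iff.mpr ?_))
        funext k
        have hvk : v k.val = r k := congrArg r (Fin.ext (Nat.mod_eq_of_lt k.isLt))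
        rw [← hvk, hrec k.val, hEk k.val (le_of_lt k.isLt)]
        unfold conSol
        push_cast [Nat.cast_sub (show 1 ≤ m by omega)]
        ring
    · rintro (⟨t, rfl⟩ | hc)
      · refine ⟨sol_inj hm3 hn2 t, ?_, fun j hj => sol_step_cond hm3 hn2 t j hj, ?_⟩
        · rw [hfin0]; exact sol_zero hm3 hn2 t hpos
        · rw [hfin0]; exact sol_wrap_cond hm3 hn2 t hpos (by omega)
      · rw [hCdef] at hc
        split_ifs at hc with h4
        · have hmeven : m % 2 = 0 := by omega
          simp only [Set.mem_insert_iff, Set.mem_singleton_iff] at hc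
          have hcop : ∀ c : ℕ, c = m - 1 ∨ c = m + 1 → Nat.Coprime c n := by
            intro c hcv
            rw [hn2]
            have hc2 : Nat.Coprime c 2 := by
              rcases hcv with h | h <;> subst h
              · exact Nat.coprime_two_right.mpr ⟨(m-2)/2, by omega⟩
              · exact Nat.coprime_two_right.mpr ⟨m/2, by omega⟩
            have hcm : Nat.Coprime c m := by
              rcases hcv with h | h
              · subst h
                have h1 : Nat.Coprime ((m-1)+1) (m-1) := by simp [Nat.coprime_self_add_left]
                rw [show (m-1)+1 = m by omega] at h1
                exact h1.symm
              · subst h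
                simpa using (by simp [Nat.coprime_self_add_left] :
                  Nat.Coprime (m+1) m)
            exact Nat.Coprime.mul_right hc2 hcm
          rcases hc with rfl | rfl
          · refine ⟨conSol_inj hm3 hn2 (m+1) (hcop _ (Or.inr rfl)), ?_,
              fun j hj => conSol_step hm3 hn2 (m+1) (by omega) (Or.inr rfl) j hj, ?_⟩
            · rw [hfin0]; exact conSol_zero hm3 hn2 _ hpos
            · rw [hfin0]; exact conSol_wrap hm3 hn2 (m+1) (by omega) (Or.inr rfl) hpos (by omega)
          · refine ⟨conSol_inj hm3 hn2 (m-1) (hcop _ (Or.inl rfl)), ?_,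
              fun j hj => conSol_step hm3 hn2 (m-1) (by omega) (Or.inl rfl) j hj, ?_⟩
            · rw [hfin0]; exact conSol_zero hm3 hn2 _ hpos
            · rw [hfin0]; exact conSol_wrap hm3 hn2 (m-1) (by omega) (Or.inl rfl) hpos (by omega)
        · exact absurd hc (Set.notMem_empty r)
  rw [show (n/2) = m from rfl] at *
  rw [hset]
  have hfin1 : (Set.range (sol n m)).Finite := Set.finite_range _
  have hfin2 : C.Finite := by
    rw [hCdef]; split_ifs
    · exact (Set.finite_singleton _).insert _
    · exact Set.finite_empty
  have hdisj : Disjoint (Set.range (sol n m)) C := by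
    rw [Set.disjoint_left]
    rintro f ⟨t, rfl⟩ hfC
    rw [hCdef] at hfC
    split_ifs at hfC
    · simp only [Set.mem_insert_iff, Set.mem_singleton_iff] at hfC
      rcases hfC with h | h
      · exact sol_ne_con hm3 hn2 t (m+1) (by omega) (by omega) h
      · exact sol_ne_con hm3 hn2 t (m-1) (by omega) (by omega) h
    · exact hfC
  rw [Set.ncard_union_eq hdisj hfin1 hfin2]
  have h1 : (Set.range (sol n m)).ncard = n := by
    rw [← Set.image_univ, Set.ncard_image_of_injective _ (sol_param_inj hm3 hn2),
      Set.ncard_univ, Nat.card_eq_fintype_card, ZMod.card]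
  rw [h1, hCdef]
  split_ifs with h4
  · rw [Set.ncard_pair (conSol_ne hm3 hn2)]
  · simp
end

section
/- Let n ≥ 6 be even. If n ≡ 2 (mod 4), then no order-n Latin square of inner distance n/2 − 1 that is circulant or back-circulant is a row product. If n ≡ 0 (mod 4), then there are exactly 2 order-n Latin squares with L(0,0) = 1 and inner distance n/2 − 1 that are both circulant and a row product, and exactly 2 that are both back-circulant and a row product. -/
/-- `L` is circulant: each row is the cyclic right-shift of the previous one. -/
def IsCirculant (n : ℕ) [NeZero n] (L : Fin n → Fin n → ZMod n) : Prop :=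
  ∀ i j : Fin n, L (i + 1) j = L i (j - 1)

/-- `L` is back-circulant: each row is the cyclic left-shift of the previous one. -/
def IsBackCirculant (n : ℕ) [NeZero n] (L : Fin n → Fin n → ZMod n) : Prop :=
  ∀ i j : Fin n, L (i + 1) j = L i (j + 1)

/-- `L` is a row product: every row has the same difference row as the first row. -/
def IsRowProduct (n : ℕ) (L : Fin n → Fin n → ZMod n) : Prop :=
  ∀ i : Fin n, ∀ j : ℕ, ∀ hj : j + 1 < n,
    L i ⟨j + 1, hj⟩ - L i ⟨j, Nat.lt_of_succ_lt hj⟩ =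
    L ⟨0, by omega⟩ ⟨j + 1, hj⟩ - L ⟨0, by omega⟩ ⟨j, Nat.lt_of_succ_lt hj⟩


namespace Stmt14Aux
variable {n : ℕ} [NeZero n]

def φ (j : Fin n) : ZMod n := (j.val : ZMod n)

lemma φ_add (a b : Fin n) : φ (a + b) = φ a + φ b := by
  show (((a + b : Fin n)).val : ZMod n) = _
  rw [Fin.add_def]
  show (((a.val + b.val) % n : ℕ) : ZMod n) = _
  rw [ZMod.natCast_mod]
  push_cast
  rfl

lemma φ_mul (a b : Fin n) : φ (a * b) = φ a * φ b := by
  show (((a * b : Fin n)).val : ZMod n) = _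
  rw [Fin.mul_def]
  show (((a.val * b.val) % n : ℕ) : ZMod n) = _
  rw [ZMod.natCast_mod]
  push_cast
  rfl

lemma φ_neg (a : Fin n) : φ (-a) = - φ a := by
  show (((-a : Fin n)).val : ZMod n) = _
  rw [Fin.neg_def]
  show (((n - a.val) % n : ℕ) : ZMod n) = _
  rw [ZMod.natCast_mod, Nat.cast_sub (le_of_lt a.isLt), ZMod.natCast_self, zero_sub]
  rfl

lemma φ_sub (a b : Fin n) : φ (a - b) = φ a - φ b := by
  rw [sub_eq_add_neg, φ_add, φ_neg, sub_eq_add_neg]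

lemma φ_zero : φ (0 : Fin n) = 0 := by
  show (((0 : Fin n)).val : ZMod n) = 0
  simp

lemma φ_one (hn : 2 ≤ n) : φ (1 : Fin n) = 1 := by
  show (((1 : Fin n)).val : ZMod n) = 1
  rw [Fin.val_one']
  rw [Nat.mod_eq_of_lt (by omega)]
  simp

lemma φ_mk (j : ℕ) (h : j < n) : φ (⟨j, h⟩ : Fin n) = (j : ZMod n) := rfl

lemma φ_inj : Function.Injective (φ (n := n)) := by
  intro a b h
  apply Fin.ext
  have h2 := congrArg ZMod.val h
  rwa [φ, φ, ZMod.val_cast_of_lt a.isLt, ZMod.val_cast_of_lt b.isLt] at h2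

lemma zdist_diff (a b d : ZMod n) (h : b - a = d) : zdist a b = min d.val (-d).val := by
  have h2 : a - b = -d := by rw [← h]; ring
  rw [zdist, h, h2, min_comm]

open Fin.NatCast Fin.CommRing in
lemma rep {L : Fin n → Fin n → ZMod n} {s : Fin n}
    (hshift : ∀ i j, L (i + 1) j = L i (j + s)) :
    ∀ (i j : Fin n), L i j = L 0 (j + s * i) := by
  have key : ∀ m : ℕ, ∀ j, L (m : Fin n) j = L 0 (j + s * (m : Fin n)) := by
    intro m
    induction m with
    | zero => intro j; simp
    | succ k ih =>
      intro j
      have h1 : ((k + 1 : ℕ) : Fin n) = (k : Fin n) + 1 := by push_cast; ring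
      rw [h1, hshift, ih]
      congr 1
      push_cast
      ring
  intro i j
  have h := key i.val j
  rwa [Fin.cast_val_eq_self] at h

lemma step_const (hn : 2 ≤ n) {L : Fin n → Fin n → ZMod n} {s : Fin n}
    (hrep : ∀ i j, L i j = L 0 (j + s * i))
    (hsurj : ∀ t : Fin n, ∃ i, s * i = t) (hRP : IsRowProduct n L) :
    ∀ t : Fin n, L 0 (t + 1) = L 0 t + (L 0 1 - L 0 0) := by
  intro t
  obtain ⟨i, hi⟩ := hsurj t
  have h := hRP i 0 (by omega)
  have e1 : (⟨0 + 1, (by omega : 0 + 1 < n)⟩ : Fin n) = 1 := by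
    apply Fin.ext
    rw [Fin.val_one']
    simp [Nat.mod_eq_of_lt (by omega : 1 < n)]
  have e0 : (⟨0, (by omega : (0:ℕ) < n)⟩ : Fin n) = 0 := by
    apply Fin.ext; simp
  rw [e1, e0] at h
  rw [hrep i 1, hrep i 0] at h
  rw [hi] at h
  have hcomm : (1 + t : Fin n) = t + 1 := add_comm _ _
  rw [hcomm, zero_add] at h
  linear_combination h

lemma row0 (hn : 2 ≤ n) {L : Fin n → Fin n → ZMod n} {c : ZMod n}
    (hstep : ∀ t : Fin n, L 0 (t + 1) = L 0 t + c) :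
    ∀ j : Fin n, L 0 j = L 0 0 + c * φ j := by
  have key : ∀ m, ∀ (hm : m < n), L 0 ⟨m, hm⟩ = L 0 0 + c * (m : ZMod n) := by
    intro m
    induction m with
    | zero =>
      intro hm
      have : (⟨0, hm⟩ : Fin n) = 0 := by apply Fin.ext; simp
      rw [this]; simp
    | succ k ih =>
      intro hm
      have hk : k < n := by omega
      have e : (⟨k + 1, hm⟩ : Fin n) = ⟨k, hk⟩ + 1 := by
        apply Fin.ext
        simp only [Fin.add_def, Fin.val_one']
        rw [Nat.mod_eq_of_lt (by omega : (1:ℕ) < n), Nat.mod_eq_of_lt hm]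
      rw [e, hstep, ih hk]
      push_cast
      ring
  intro j
  exact key j.val j.isLt

lemma master (hn : 2 ≤ n) {L : Fin n → Fin n → ZMod n} {s : Fin n} {e : ZMod n}
    (hes : φ s = e) (hshift : ∀ i j, L (i + 1) j = L i (j + s))
    (hsurj : ∀ t : Fin n, ∃ i, s * i = t) (hRP : IsRowProduct n L) :
    ∀ i j, L i j = L 0 0 + (L 0 1 - L 0 0) * (φ j + e * φ i) := by
  have hrep := rep hshift
  have hstep := step_const hn hrep hsurj hRP
  have h0 := row0 hn hstep
  intro i j
  rw [hrep i j, h0, φ_add, φ_mul, hes]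

lemma isUnit_of_row_inj (hn : 2 ≤ n) {c a : ZMod n}
    (hinj : Function.Injective (fun j : Fin n => a + c * φ j)) : IsUnit c := by
  have hmulinj : Function.Injective (fun x : ZMod n => c * x) := by
    intro x y hxy
    have hxy' : c * x = c * y := hxy
    have hx := ZMod.val_lt x
    have hy := ZMod.val_lt y
    have h2 : (⟨x.val, hx⟩ : Fin n) = ⟨y.val, hy⟩ := by
      apply hinj
      show a + c * φ (⟨x.val, hx⟩ : Fin n) = a + c * φ (⟨y.val, hy⟩ : Fin n)
      rw [φ_mk, φ_mk, ZMod.natCast_rightInverse x, ZMod.natCast_rightInverse y, hxy']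
    apply ZMod.val_injective
    exact congrArg Fin.val h2
  have hsurj : Function.Surjective (fun x : ZMod n => c * x) :=
    Finite.surjective_of_injective hmulinj
  obtain ⟨d, hd⟩ := hsurj 1
  exact IsUnit.of_mul_eq_one d hd

lemma innerDist_eq (hn : 6 ≤ n) {L : Fin n → Fin n → ZMod n} {a c e : ZMod n}
    (heu : e = 1 ∨ e = -1)
    (hfull : ∀ i j, L i j = a + c * (φ j + e * φ i)) :
    innerDist n L = min c.val (-c).val := by
  set m := min c.val (-c).val with hm
  have hzd : ∀ (p q : ZMod n), q - p = c ∨ q - p = -c → zdist p q = m := by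
    rintro p q (h | h)
    · exact zdist_diff p q c h
    · rw [zdist_diff p q (-c) h, neg_neg, min_comm]
  have hhor : ∀ (i : Fin n) (j : ℕ) (hj : j + 1 < n),
      zdist (L i ⟨j, Nat.lt_of_succ_lt hj⟩) (L i ⟨j + 1, hj⟩) = m := by
    intro i j hj
    apply hzd; left
    rw [hfull, hfull]
    simp only [φ_mk]
    push_cast
    ring
  have hver : ∀ (j : Fin n) (i : ℕ) (hi : i + 1 < n),
      zdist (L ⟨i, Nat.lt_of_succ_lt hi⟩ j) (L ⟨i + 1, hi⟩ j) = m := by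
    intro j i hi
    apply hzd
    rcases heu with rfl | rfl
    · left; rw [hfull, hfull]; simp only [φ_mk]; push_cast; ring
    · right; rw [hfull, hfull]; simp only [φ_mk]; push_cast; ring
  rw [innerDist]
  have hset : { d : ℕ |
      (∃ i : Fin n, ∃ j : ℕ, ∃ hj : j + 1 < n,
        d = zdist (L i ⟨j, Nat.lt_of_succ_lt hj⟩) (L i ⟨j + 1, hj⟩)) ∨
      (∃ j : Fin n, ∃ i : ℕ, ∃ hi : i + 1 < n,
        d = zdist (L ⟨i, Nat.lt_of_succ_lt hi⟩ j) (L ⟨i + 1, hi⟩ j)) } = {m} := by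
    rw [Set.eq_singleton_iff_nonempty_unique_mem]
    constructor
    · exact ⟨m, Or.inl ⟨0, 0, by omega, (hhor 0 0 (by omega)).symm⟩⟩
    · rintro d (⟨i, j, hj, rfl⟩ | ⟨j, i, hi, rfl⟩)
      · exact hhor i j hj
      · exact hver j i hi
  rw [hset, csInf_singleton]

lemma val_cases (hn : 6 ≤ n) (hev : Even n) {c : ZMod n}
    (h : min c.val (-c).val = n / 2 - 1) : c.val = n / 2 - 1 ∨ c.val = n / 2 + 1 := by
  have hc0 : c ≠ 0 := by
    rintro rfl
    rw [neg_zero, ZMod.val_zero, Nat.min_self] at h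
    omega
  rw [ZMod.neg_val, if_neg hc0] at h
  obtain ⟨k, hk⟩ := hev
  have hlt := ZMod.val_lt c
  rcases le_total c.val (n - c.val) with hle | hle
  · rw [min_eq_left hle] at h; omega
  · rw [min_eq_right hle] at h; omega

lemma not_unit_parity (hn : 6 ≤ n) (h4 : n % 4 = 2) {c : ZMod n} (hc : IsUnit c)
    (hv : c.val = n / 2 - 1 ∨ c.val = n / 2 + 1) : False := by
  obtain ⟨u, rfl⟩ := hc
  have hcop : Nat.gcd ((u : ZMod n)).val n = 1 := ZMod.val_coe_unit_coprime u
  have h2c : 2 ∣ ((u : ZMod n)).val := by omega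
  have h2n : 2 ∣ n := by omega
  have := Nat.dvd_gcd h2c h2n
  rw [hcop] at this
  omega

lemma coprime_half (hn : 6 ≤ n) (h4 : n % 4 = 0) {m : ℕ}
    (hm : m = n / 2 - 1 ∨ m = n / 2 + 1) : Nat.Coprime m n := by
  have h1 : Nat.gcd m n ∣ m := Nat.gcd_dvd_left _ _
  have h2 : Nat.gcd m n ∣ n := Nat.gcd_dvd_right _ _
  have h3 : Nat.gcd m n ∣ 2 := by
    have hmul : Nat.gcd m n ∣ 2 * m := h1.mul_left 2
    rcases (by omega : 2 * m = n - 2 ∨ 2 * m = n + 2) with h | h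
    · rw [h] at hmul
      have := Nat.dvd_sub h2 hmul
      simpa [show n - (n - 2) = 2 by omega] using this
    · rw [h] at hmul
      have := Nat.dvd_sub hmul h2
      simpa [show n + 2 - n = 2 by omega] using this
  rcases (Nat.dvd_prime Nat.prime_two).mp h3 with hg | hg
  · exact hg
  · exfalso
    rw [hg] at h1
    omega

def M (c e : ZMod n) : Fin n → Fin n → ZMod n := fun i j => 1 + c * (φ j + e * φ i)

lemma M_full (c e : ZMod n) : ∀ i j, M c e i j = 1 + c * (φ j + e * φ i) :=
  fun _ _ => rfl

lemma M_shift (hn : 2 ≤ n) {s : Fin n} {e : ZMod n} (hes : φ s = e) (c : ZMod n) :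
    ∀ i j, M c e (i + 1) j = M c e i (j + s) := by
  intro i j
  show 1 + c * (φ j + e * φ (i + 1)) = 1 + c * (φ (j + s) + e * φ i)
  rw [φ_add, φ_add, φ_one hn, hes]
  ring

lemma M_zero (c e : ZMod n) : M c e 0 0 = 1 := by
  show 1 + c * (φ 0 + e * φ 0) = 1
  rw [φ_zero]
  ring

lemma M_latin {c e : ZMod n} (hc : IsUnit c) (he : IsUnit e) : IsLatin n (M c e) := by
  constructor
  · intro i j1 j2 h
    apply φ_inj
    have h2 : c * (φ j1 - φ j2) = 0 := by
      have h' : (1 : ZMod n) + c * (φ j1 + e * φ i) = 1 + c * (φ j2 + e * φ i) := h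
      linear_combination h'
    obtain ⟨u, rfl⟩ := hc
    have := (Units.mul_right_eq_zero u).mp h2
    linear_combination this
  · intro j i1 i2 h
    apply φ_inj
    have h2 : (c * e) * (φ i1 - φ i2) = 0 := by
      have h' : (1 : ZMod n) + c * (φ j + e * φ i1) = 1 + c * (φ j + e * φ i2) := h
      linear_combination h'
    obtain ⟨u, hu⟩ := hc.mul he
    rw [← hu] at h2
    have := (Units.mul_right_eq_zero u).mp h2
    linear_combination this

lemma M_rowprod (c e : ZMod n) : IsRowProduct n (M c e) := by
  intro i j hj
  simp only [M, φ_mk]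
  push_cast
  ring

lemma M_ne (hn : 6 ≤ n) {c d e : ZMod n} (hcd : c ≠ d) : M c e ≠ M d e := by
  intro h
  have h2 := congrFun (congrFun h 0) 1
  have h3 : (1 : ZMod n) + c * (φ (1 : Fin n) + e * φ (0 : Fin n)) =
      1 + d * (φ (1 : Fin n) + e * φ (0 : Fin n)) := h2
  rw [φ_zero, φ_one (by omega)] at h3
  apply hcd
  linear_combination h3

lemma mem_forward (hn : 6 ≤ n) (hev : Even n) {L : Fin n → Fin n → ZMod n}
    {s : Fin n} {e : ZMod n}
    (hes : φ s = e) (hsurj : ∀ t : Fin n, ∃ i, s * i = t) (heu : e = 1 ∨ e = -1)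
    (hLat : IsLatin n L) (h00 : L 0 0 = 1) (hID : innerDist n L = n / 2 - 1)
    (hshift : ∀ i j, L (i + 1) j = L i (j + s)) (hRP : IsRowProduct n L) :
    L = M ((n / 2 - 1 : ℕ) : ZMod n) e ∨ L = M ((n / 2 + 1 : ℕ) : ZMod n) e := by
  have hn2 : 2 ≤ n := by omega
  have hfull := master hn2 hes hshift hsurj hRP
  set c := L 0 1 - L 0 0 with hc
  have hrow0 : ∀ j, L 0 j = L 0 0 + c * φ j := by
    intro j
    rw [hfull 0 j, φ_zero]
    ring
  have hcu : IsUnit c := by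
    apply isUnit_of_row_inj hn2 (a := L 0 0)
    rw [show (fun j : Fin n => L 0 0 + c * φ j) = L 0 from funext fun j => (hrow0 j).symm]
    exact hLat.1 0
  have hmin : min c.val (-c).val = n / 2 - 1 := by
    rw [← innerDist_eq hn heu hfull, hID]
  have hv := val_cases hn hev hmin
  have hceq : ((c.val : ℕ) : ZMod n) = c := ZMod.natCast_rightInverse c
  rcases hv with hv | hv
  · left
    funext i j
    rw [hfull i j, h00, show c = ((n / 2 - 1 : ℕ) : ZMod n) by rw [← hceq, hv]]
    rfl
  · right
    funext i j
    rw [hfull i j, h00, show c = ((n / 2 + 1 : ℕ) : ZMod n) by rw [← hceq, hv]]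
    rfl

end Stmt14Aux

open Stmt14Aux in
theorem stmt14 (n : ℕ) [NeZero n] (hn : 6 ≤ n) (he : Even n) :
    (n % 4 = 2 → ∀ L : Fin n → Fin n → ZMod n, IsLatin n L →
      innerDist n L = n / 2 - 1 → (IsCirculant n L ∨ IsBackCirculant n L) →
      ¬ IsRowProduct n L) ∧
    (n % 4 = 0 →
      ({L : Fin n → Fin n → ZMod n | IsLatin n L ∧ L 0 0 = 1 ∧
          innerDist n L = n / 2 - 1 ∧ IsCirculant n L ∧ IsRowProduct n L}.ncard = 2 ∧
       {L : Fin n → Fin n → ZMod n | IsLatin n L ∧ L 0 0 = 1 ∧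
          innerDist n L = n / 2 - 1 ∧ IsBackCirculant n L ∧ IsRowProduct n L}.ncard = 2)) := by
  have hn2 : 2 ≤ n := by omega
  constructor
  · intro h4 L hLat hID hcb hRP
    obtain ⟨s, e, hes, hsurj, heu, hshift⟩ :
        ∃ (s : Fin n) (e : ZMod n), φ s = e ∧ (∀ t : Fin n, ∃ i, s * i = t) ∧
          (e = 1 ∨ e = -1) ∧ (∀ i j, L (i + 1) j = L i (j + s)) := by
      rcases hcb with hC | hB
      · exact ⟨-1, -1, by rw [φ_neg, φ_one hn2], fun t => ⟨-t, by open Fin.CommRing in ring⟩, Or.inr rfl,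
          fun i j => by rw [hC, sub_eq_add_neg]⟩
      · exact ⟨1, 1, φ_one hn2, fun t => ⟨t, one_mul t⟩, Or.inl rfl, hB⟩
    have hfull := master hn2 hes hshift hsurj hRP
    set c := L 0 1 - L 0 0 with hc
    have hrow0 : ∀ j, L 0 j = L 0 0 + c * φ j := by
      intro j; rw [hfull 0 j, φ_zero]; ring
    have hcu : IsUnit c := by
      apply isUnit_of_row_inj hn2 (a := L 0 0)
      rw [show (fun j : Fin n => L 0 0 + c * φ j) = L 0 from funext fun j => (hrow0 j).symm]
      exact hLat.1 0
    have hmin : min c.val (-c).val = n / 2 - 1 := by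
      rw [← innerDist_eq hn heu hfull, hID]
    exact not_unit_parity hn h4 hcu (val_cases hn he hmin)
  · intro h4
    set c1 : ZMod n := ((n / 2 - 1 : ℕ) : ZMod n) with hc1
    set c2 : ZMod n := ((n / 2 + 1 : ℕ) : ZMod n) with hc2
    have hv1 : c1.val = n / 2 - 1 := ZMod.val_cast_of_lt (by omega)
    have hv2 : c2.val = n / 2 + 1 := ZMod.val_cast_of_lt (by omega)
    have hu1 : IsUnit c1 := (ZMod.isUnit_iff_coprime _ n).mpr (coprime_half hn h4 (Or.inl rfl))
    have hu2 : IsUnit c2 := (ZMod.isUnit_iff_coprime _ n).mpr (coprime_half hn h4 (Or.inr rfl))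
    have hne12 : c1 ≠ c2 := by
      intro h; rw [h, hv2] at hv1; omega
    have hne1 : c1 ≠ 0 := by
      intro h; rw [h, ZMod.val_zero] at hv1; omega
    have hne2 : c2 ≠ 0 := by
      intro h; rw [h, ZMod.val_zero] at hv2; omega
    have hmin1 : min c1.val (-c1).val = n / 2 - 1 := by
      rw [ZMod.neg_val, if_neg hne1, hv1, Nat.min_def]
      split <;> omega
    have hmin2 : min c2.val (-c2).val = n / 2 - 1 := by
      rw [ZMod.neg_val, if_neg hne2, hv2, Nat.min_def]
      split <;> omega
    have key : ∀ (s : Fin n) (e : ZMod n), φ s = e → (∀ t : Fin n, ∃ i, s * i = t) →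
        (e = 1 ∨ e = -1) → ∀ (P : (Fin n → Fin n → ZMod n) → Prop),
        (∀ L, P L ↔ ∀ i j, L (i + 1) j = L i (j + s)) →
        {L : Fin n → Fin n → ZMod n | IsLatin n L ∧ L 0 0 = 1 ∧
          innerDist n L = n / 2 - 1 ∧ P L ∧ IsRowProduct n L}.ncard = 2 := by
      intro s e hes hsurj heu P hP
      have heunit : IsUnit e := by
        rcases heu with rfl | rfl
        · exact isUnit_one
        · exact isUnit_one.neg
      have hmemM : ∀ c : ZMod n, IsUnit c → min c.val (-c).val = n / 2 - 1 →
          M c e ∈ {L : Fin n → Fin n → ZMod n | IsLatin n L ∧ L 0 0 = 1 ∧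
            innerDist n L = n / 2 - 1 ∧ P L ∧ IsRowProduct n L} := by
        intro c hc hmin
        refine ⟨M_latin hc heunit, M_zero c e, ?_, (hP _).mpr (M_shift hn2 hes c), M_rowprod c e⟩
        rw [innerDist_eq hn heu (M_full c e), hmin]
      have hseteq : {L : Fin n → Fin n → ZMod n | IsLatin n L ∧ L 0 0 = 1 ∧
            innerDist n L = n / 2 - 1 ∧ P L ∧ IsRowProduct n L} = {M c1 e, M c2 e} := by
        ext L
        simp only [Set.mem_setOf_eq, Set.mem_insert_iff, Set.mem_singleton_iff]
        constructor
        · rintro ⟨hLat, h00, hID, hPL, hRPL⟩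
          exact mem_forward hn he hes hsurj heu hLat h00 hID ((hP L).mp hPL) hRPL
        · rintro (rfl | rfl)
          · exact hmemM c1 hu1 hmin1
          · exact hmemM c2 hu2 hmin2
      rw [hseteq]
      exact Set.ncard_pair (M_ne hn hne12)
    constructor
    · exact key (-1) (-1) (by rw [φ_neg, φ_one hn2]) (fun t => ⟨-t, by open Fin.CommRing in ring⟩) (Or.inr rfl)
        (IsCirculant n) (fun L => ⟨fun hC i j => by rw [hC, sub_eq_add_neg],
          fun hS i j => by rw [hS, sub_eq_add_neg]⟩)
    · exact key 1 1 (φ_one hn2) (fun t => ⟨t, one_mul t⟩) (Or.inl rfl)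
        (IsBackCirculant n) (fun L => Iff.rfl)
end

section
/- Let n ≥ 6 be even and let L be an order-n Latin square with inner distance n/2 − 1. If there exists an index 0 ≤ i ≤ n−2 such that rows i and i+1 have the same difference row (i.e. L(i, j+1) − L(i, j) = L(i+1, j+1) − L(i+1, j) for all 0 ≤ j ≤ n−2), then L is a row product (all rows of L have the same difference row). -/
/-!
Write `n = 2c`. Inner distance `c - 1` puts every horizontal and vertical difference of adjacent
cells in `{c - 1, c, c + 1}`. Suppose rows `k` and `k + 1` differ by a constant `v`. Then rows `k`
and `k + 2` differ in each column by `v + w_j`, a nonzero integer within `1` of `v - c`: the offsets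
take two values differing by `1`, or the values `±1` when `v = c`.

If a bijective row `r` and an injective row `s` differ by offsets `u` or `w`, the positions with
offset `u` are closed under shifting the value of `r` by `u - w`. So offsets differing by `1` are
constant, and offsets `±1`, if not constant, are determined by the parity of `r`. In that case a
sign change between adjacent cells forces the two horizontal differences to be `c - 1` and `c + 1`,
and parity gives a contradiction: for odd `c` there can be no sign change at all, and for even `c`
the sum `r + s` is constant, while it differs by `4` at two cells with offset `1` whose `r`-values
differ by `2`.

Hence a constant vertical offset propagates from rows `i, i + 1` to all pairs of adjacent rows
(downwards by the same argument on the reversed rows), which makes `L` a row product.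
-/

open Function

section Adjacency
variable {n : ℕ}

theorem eq_of_adjacent_eq {α : Type*} {f : Fin n → α}
    (h : ∀ a b : Fin n, a.val + 1 = b.val → f a = f b) (a b : Fin n) : f a = f b := by
  have key : ∀ k (hk : k < n), f ⟨k, hk⟩ = f ⟨0, by omega⟩ := by
    intro k
    induction k with
    | zero => intro _; rfl
    | succ k ih => intro hk; rw [← h ⟨k, by omega⟩ ⟨k + 1, hk⟩ rfl, ih]
  exact (key a a.isLt).trans (key b b.isLt).symm

theorem forall_lt_of_succ_iff {P : ℕ → Prop} {m i : ℕ}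
    (h : ∀ k, k + 1 < m → (P k ↔ P (k + 1))) (hi : i < m) (hP : P i) : ∀ k < m, P k := by
  have key : ∀ k < m, (P k ↔ P 0) := by
    intro k
    induction k with
    | zero => intro _; rfl
    | succ k ih => intro hk; rw [← h k hk]; exact ih (by omega)
  exact fun k hk => (key k hk).2 ((key i hi).1 hP)

theorem innerDist_le_zdist_row_s17 (L : Fin n → Fin n → ZMod n) (i : Fin n) {a b : Fin n}
    (hab : a.val + 1 = b.val) : innerDist n L ≤ zdist (L i a) (L i b) := by
  obtain ⟨j, hj⟩ := a
  obtain ⟨k, hk⟩ := b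
  simp only at hab
  subst hab
  exact Nat.sInf_le (Or.inl ⟨i, j, hk, rfl⟩)

theorem innerDist_le_zdist_col (L : Fin n → Fin n → ZMod n) (j : Fin n) {a b : Fin n}
    (hab : a.val + 1 = b.val) : innerDist n L ≤ zdist (L a j) (L b j) := by
  obtain ⟨i, hi⟩ := a
  obtain ⟨k, hk⟩ := b
  simp only at hab
  subst hab
  exact Nat.sInf_le (Or.inr ⟨j, i, hk, rfl⟩)

theorem exists_sub_eq_of_sub_eq_sub [NeZero n] {r s : Fin n → ZMod n}
    (h : ∀ j (hj : j + 1 < n), r ⟨j + 1, hj⟩ - r ⟨j, by omega⟩ = s ⟨j + 1, hj⟩ - s ⟨j, by omega⟩) :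
    ∃ v, ∀ j, s j - r j = v := by
  refine ⟨s 0 - r 0, fun j => eq_of_adjacent_eq (f := fun j => s j - r j) (fun a b hab => ?_) j 0⟩
  obtain ⟨j, hj⟩ := a
  obtain ⟨k, hk⟩ := b
  simp only at hab
  subst hab
  linear_combination h j hk

theorem isRowProduct_of_exists_sub_eq {L : Fin n → Fin n → ZMod n}
    (h : ∀ k (hk : k + 1 < n), ∃ v, ∀ j, L ⟨k + 1, hk⟩ j - L ⟨k, by omega⟩ j = v) :
    IsRowProduct n L := by
  have key : ∀ k (hk : k < n), ∃ v, ∀ j, L ⟨k, hk⟩ j - L ⟨0, by omega⟩ j = v := by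
    intro k
    induction k with
    | zero => exact fun _ => ⟨0, fun j => sub_self _⟩
    | succ k ih =>
      intro hk
      obtain ⟨v, hv⟩ := ih (by omega)
      obtain ⟨w, hw⟩ := h k hk
      exact ⟨w + v, fun j => by linear_combination hw j + hv j⟩
  rintro ⟨i, hi⟩ j hj
  obtain ⟨v, hv⟩ := key i hi
  linear_combination hv ⟨j + 1, hj⟩ - hv ⟨j, by omega⟩

end Adjacency

section NearHalf
variable {n c : ℕ}

theorem natCast_ne_zero_of_lt {k : ℕ} (hk : 0 < k) (hkn : k < n) : (k : ZMod n) ≠ 0 := by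
  rw [Ne, ZMod.natCast_eq_zero_iff]
  exact fun h => absurd (Nat.le_of_dvd hk h) (by omega)

theorem add_eq_zero_of_val_add_val_eq [NeZero n] {x y : ZMod n} (h : x.val + y.val = n) :
    x + y = 0 := by
  rw [← ZMod.natCast_zmod_val x, ← ZMod.natCast_zmod_val y, ← Nat.cast_add, h, ZMod.natCast_self]

/-- For `n = 2c`, the residues at cyclic distance at least `c - 1` from `0`. -/
def NearHalf (c : ℕ) (x : ZMod n) : Prop := c - 1 ≤ x.val ∧ x.val ≤ c + 1

def NearHalfSteps (c : ℕ) (r : Fin n → ZMod n) : Prop :=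
  ∀ a b : Fin n, a.val + 1 = b.val → NearHalf c (r b - r a)

variable [NeZero n]

theorem nearHalf_sub_of_le_zdist (hc : n = 2 * c) {a b : ZMod n} (hab : a ≠ b)
    (h : c - 1 ≤ zdist a b) : NearHalf c (b - a) := by
  have hval : (a - b).val = n - (b - a).val := by
    rw [← neg_sub, ZMod.neg_val, if_neg (sub_ne_zero.mpr hab.symm)]
  have := ZMod.val_lt (b - a)
  rw [zdist, le_min_iff, hval] at h
  constructor <;> omega

theorem NearHalf.neg (hc : n = 2 * c) {x : ZMod n} (hx : NearHalf c x) : NearHalf c (-x) := by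
  unfold NearHalf at hx ⊢
  rw [ZMod.neg_val]
  split_ifs with h
  · rw [h, ZMod.val_zero] at hx
    omega
  · have := ZMod.val_lt x
    omega

theorem NearHalf.val_eq_of_eq_add_two (hc : n = 2 * c) (hc3 : 3 ≤ c) {x y : ZMod n}
    (hx : NearHalf c x) (hy : NearHalf c y) (h : x = y + 2) : x.val = c + 1 ∧ y.val = c - 1 := by
  have hval : x.val = (y.val + 2) % n := by
    rw [h, ← ZMod.val_natCast, Nat.cast_add, ZMod.natCast_zmod_val, Nat.cast_ofNat]
  unfold NearHalf at hx hy
  rcases lt_or_ge (y.val + 2) n with hlt | hge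
  · rw [Nat.mod_eq_of_lt hlt] at hval
    omega
  · rw [Nat.mod_eq_sub_mod hge, Nat.mod_eq_of_lt (by omega)] at hval
    omega

end NearHalf

section Offsets
variable {n : ℕ} {r s : Fin n → ZMod n} {u w : ZMod n}

theorem sub_eq_of_eq_add_nsmul (hr : Bijective r) (hs : Injective s)
    (hoff : ∀ j, s j - r j = u ∨ s j - r j = w) {k : Fin n} (hk : s k - r k = u) :
    ∀ (m : ℕ) (l : Fin n), r l = r k + m • (u - w) → s l - r l = u := by
  intro m
  induction m with
  | zero =>
    intro l hl
    rw [zero_smul, add_zero] at hl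
    rwa [hr.1 hl]
  | succ m ih =>
    intro l hl
    obtain ⟨l', hl'⟩ := hr.2 (r k + m • (u - w))
    rcases hoff l with hlu | hlw
    · exact hlu
    -- offset `w` at `l` would make `s l` collide with `s l'`, where `l'` carries `u` by induction
    · have hll' : l = l' := hs <| by
        linear_combination hlw - ih l' hl' + hl - hl' - succ_nsmul (u - w) m
      subst hll'
      have huw : u = w := by rw [hl', succ_nsmul] at hl; linear_combination -hl
      rw [hlw, huw]

theorem exists_sub_eq_of_sub_eq_one [NeZero n] (hr : Bijective r) (hs : Injective s)
    (hoff : ∀ j, s j - r j = u ∨ s j - r j = w) (huw : u - w = 1) : ∃ v, ∀ j, s j - r j = v := by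
  by_cases hu : ∃ k, s k - r k = u
  · obtain ⟨k, hk⟩ := hu
    refine ⟨u, fun l => sub_eq_of_eq_add_nsmul hr hs hoff hk (r l - r k).val l ?_⟩
    rw [huw, nsmul_one, ZMod.natCast_zmod_val, add_sub_cancel]
  · simp only [not_exists] at hu
    exact ⟨w, fun j => (hoff j).resolve_left (hu j)⟩

end Offsets

section PlusMinusOne
variable {n c : ℕ} [NeZero n] {r s : Fin n → ZMod n}

theorem even_val_iff_castHom_eq_zero (hn : 2 ∣ n) (x : ZMod n) :
    Even x.val ↔ ZMod.castHom hn (ZMod 2) x = 0 := by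
  rw [← ZMod.natCast_eq_zero_iff_even, ← map_natCast (ZMod.castHom hn (ZMod 2)),
    ZMod.natCast_zmod_val]

theorem sub_eq_sub_of_castHom_eq (hn : 2 ∣ n) (hr : Bijective r) (hs : Injective s)
    (hoff : ∀ j, s j - r j = 1 ∨ s j - r j = -1) {a b : Fin n}
    (hab : ZMod.castHom hn (ZMod 2) (r a) = ZMod.castHom hn (ZMod 2) (r b)) :
    s a - r a = s b - r b := by
  have key : ∀ a b, ZMod.castHom hn (ZMod 2) (r a) = ZMod.castHom hn (ZMod 2) (r b) →
      s a - r a = 1 → s b - r b = 1 := by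
    intro a b hab ha
    obtain ⟨m, hm⟩ : Even (r b - r a).val := by
      rw [even_val_iff_castHom_eq_zero hn, map_sub, hab, sub_self]
    refine sub_eq_of_eq_add_nsmul hr hs hoff ha m b ?_
    have h2m : r b - r a = ((m + m : ℕ) : ZMod n) := by rw [← hm, ZMod.natCast_zmod_val]
    rw [nsmul_eq_mul]
    push_cast at h2m
    linear_combination h2m
  rcases hoff a with ha | ha
  · rw [ha, key a b hab ha]
  · rcases hoff b with hb | hb
    · rw [hb, key b a hab.symm hb]
    · rw [ha, hb]

theorem sub_eq_sub_iff_even_val (hn : 2 ∣ n) (hn2 : 2 < n) (hr : Bijective r)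
    (hs : Injective s) (hoff : ∀ j, s j - r j = 1 ∨ s j - r j = -1) {ja jb : Fin n}
    (hja : s ja - r ja = -1) (hjb : s jb - r jb = 1) (a b : Fin n) :
    s a - r a = s b - r b ↔ Even (r b - r a).val := by
  have hpar : ∀ {a b}, ZMod.castHom hn (ZMod 2) (r a) = ZMod.castHom hn (ZMod 2) (r b) →
      s a - r a = s b - r b := sub_eq_sub_of_castHom_eq hn hr hs hoff
  have h2 : (-1 : ZMod n) ≠ 1 := fun h =>
    natCast_ne_zero_of_lt (k := 2) two_pos hn2 (by push_cast; linear_combination -h)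
  have hsep : ZMod.castHom hn (ZMod 2) (r ja) ≠ ZMod.castHom hn (ZMod 2) (r jb) := fun h =>
    h2 (hja.symm.trans ((hpar h).trans hjb))
  rw [even_val_iff_castHom_eq_zero hn, map_sub, sub_eq_zero]
  refine ⟨fun hab => ?_, fun hab => hpar hab.symm⟩
  by_contra hba
  have two_classes : ∀ p q p' q' : ZMod 2, p ≠ q → p' ≠ q' →
      p = p' ∧ q = q' ∨ p = q' ∧ q = p' := by decide
  rcases two_classes _ _ _ _ (Ne.symm hba) hsep with ⟨ha, hb⟩ | ⟨ha, hb⟩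
  · exact h2 (hja.symm.trans ((hpar ha).symm.trans (hab.trans ((hpar hb).trans hjb))))
  · exact h2 (hja.symm.trans ((hpar hb).symm.trans (hab.symm.trans ((hpar ha).trans hjb))))

theorem val_sub_of_sub_ne_sub (hc : n = 2 * c) (hc3 : 3 ≤ c) (hrd : NearHalfSteps c r)
    (hsd : NearHalfSteps c s) (hoff : ∀ j, s j - r j = 1 ∨ s j - r j = -1) {a b : Fin n}
    (hab : a.val + 1 = b.val) (hne : s a - r a ≠ s b - r b) :
    ((r b - r a).val = c - 1 ∨ (r b - r a).val = c + 1) ∧ (r b - r a) + (s b - s a) = 0 := by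
  have hr := hrd a b hab
  have hs := hsd a b hab
  rcases hoff a with ha | ha <;> rcases hoff b with hb | hb
  · exact absurd (ha.trans hb.symm) hne
  · obtain ⟨h1, h2⟩ := hr.val_eq_of_eq_add_two hc hc3 hs (by linear_combination ha - hb)
    exact ⟨Or.inr h1, add_eq_zero_of_val_add_val_eq (by omega)⟩
  · obtain ⟨h1, h2⟩ := hs.val_eq_of_eq_add_two hc hc3 hr (by linear_combination hb - ha)
    exact ⟨Or.inl h2, add_eq_zero_of_val_add_val_eq (by omega)⟩
  · exact absurd (ha.trans hb.symm) hne

theorem exists_sub_eq_of_sub_eq_one_or_neg_one (hc : n = 2 * c) (hc3 : 3 ≤ c)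
    (hr : Bijective r) (hs : Injective s) (hrd : NearHalfSteps c r) (hsd : NearHalfSteps c s)
    (hoff : ∀ j, s j - r j = 1 ∨ s j - r j = -1) : ∃ v, ∀ j, s j - r j = v := by
  by_contra hmixed
  simp only [not_exists, not_forall] at hmixed
  obtain ⟨ja, hja⟩ : ∃ j, s j - r j = -1 := (hmixed 1).imp fun j hj => (hoff j).resolve_left hj
  obtain ⟨jb, hjb⟩ : ∃ j, s j - r j = 1 := (hmixed (-1)).imp fun j hj => (hoff j).resolve_right hj
  have hpar := sub_eq_sub_iff_even_val ⟨c, hc⟩ (by omega) hr hs hoff hja hjb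
  have hflip := fun {a b : Fin n} => val_sub_of_sub_ne_sub hc hc3 hrd hsd hoff (a := a) (b := b)
  rcases Nat.even_or_odd c with hceven | hcodd
  -- each step of `r + s` is `c + c` or `(c - 1) + (c + 1)`, according as the sign is kept or not
  · have hsum : ∀ a b, r a + s a = r b + s b := eq_of_adjacent_eq fun a b hab => by
      by_cases hne : s a - r a = s b - r b
      · have hstep := hrd a b hab
        unfold NearHalf at hstep
        have hval : (r b - r a).val = c := by
          rw [Nat.even_iff] at hceven
          have := Nat.even_iff.mp ((hpar a b).1 hne)
          omega
        have h0 := add_eq_zero_of_val_add_val_eq (x := r b - r a) (y := r b - r a) (by omega)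
        linear_combination hne - h0
      · linear_combination -(hflip hab hne).2
    obtain ⟨q, hq⟩ := hr.2 (r jb + 2)
    have hq1 : s q - r q = 1 := by
      rw [← hjb]
      refine ((hpar jb q).2 ?_).symm
      rw [hq, add_sub_cancel_left, ZMod.val_two_eq_two_mod, Nat.mod_eq_of_lt (by omega)]
      exact even_two
    apply natCast_ne_zero_of_lt (n := n) (k := 4) (by norm_num) (by omega)
    push_cast
    linear_combination hsum q jb - hq1 - 2 * hq + hjb
  · have hconst := eq_of_adjacent_eq (f := fun j => s j - r j) fun a b hab => by
      by_contra hne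
      refine (hpar a b).not.1 hne ?_
      rw [Nat.odd_iff] at hcodd
      rcases (hflip hab hne).1 with h | h <;> rw [h, Nat.even_iff] <;> omega
    have h2 : (2 : ZMod n) = 0 := by linear_combination hja - hjb + hconst jb ja
    exact natCast_ne_zero_of_lt (n := n) (k := 2) two_pos (by omega) (by exact_mod_cast h2)

end PlusMinusOne

section Propagation
variable {n c : ℕ} [NeZero n]

theorem exists_sub_eq_of_exists_sub_eq (hc : n = 2 * c) (hc3 : 3 ≤ c)
    {r₀ r₁ r₂ : Fin n → ZMod n} (h₀ : Injective r₀) (h₂ : Injective r₂)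
    (hd₀ : NearHalfSteps c r₀) (hd₂ : NearHalfSteps c r₂)
    (hv₀₁ : ∀ j, NearHalf c (r₁ j - r₀ j)) (hv₁₂ : ∀ j, NearHalf c (r₂ j - r₁ j))
    (h₀₂ : ∀ j, r₂ j ≠ r₀ j) (h₀₁ : ∃ v, ∀ j, r₁ j - r₀ j = v) :
    ∃ w, ∀ j, r₂ j - r₁ j = w := by
  obtain ⟨v, hv⟩ := h₀₁
  have hb₀ : Bijective r₀ := (Fintype.bijective_iff_injective_and_card r₀).mpr ⟨h₀, by simp⟩
  have hvN : NearHalf c v := hv 0 ▸ hv₀₁ 0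
  have hoff : ∀ j, ∃ t : ℤ, t ≠ 0 ∧ (v.val : ℤ) - c - 1 ≤ t ∧ t ≤ (v.val : ℤ) - c + 1 ∧
      r₂ j - r₀ j = t := by
    intro j
    have hw := hv₁₂ j
    unfold NearHalf at hw
    have ht : r₂ j - r₀ j = ((v.val + (r₂ j - r₁ j).val - n : ℤ) : ZMod n) := by
      push_cast
      rw [ZMod.natCast_self, ZMod.natCast_zmod_val, ZMod.natCast_zmod_val, ← hv j]
      ring
    refine ⟨_, fun h0 => h₀₂ j ?_, by omega, by omega, ht⟩
    rwa [h0, Int.cast_zero, sub_eq_zero] at ht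
  suffices ∃ u, ∀ j, r₂ j - r₀ j = u by
    obtain ⟨u, hu⟩ := this
    exact ⟨u - v, fun j => by linear_combination hu j - hv j⟩
  obtain hlo | hmid | hhi : v.val = c - 1 ∨ v.val = c ∨ v.val = c + 1 := by
    unfold NearHalf at hvN
    omega
  · refine exists_sub_eq_of_sub_eq_one hb₀ h₂ (u := -1) (w := -2) (fun j => ?_) (by ring)
    obtain ⟨t, ht0, htl, htu, ht⟩ := hoff j
    obtain rfl | rfl : t = -1 ∨ t = -2 := by omega
    · left; simpa using ht
    · right; simpa using ht
  · refine exists_sub_eq_of_sub_eq_one_or_neg_one hc hc3 hb₀ h₂ hd₀ hd₂ fun j => ?_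
    obtain ⟨t, ht0, htl, htu, ht⟩ := hoff j
    obtain rfl | rfl : t = 1 ∨ t = -1 := by omega
    · left; simpa using ht
    · right; simpa using ht
  · refine exists_sub_eq_of_sub_eq_one hb₀ h₂ (u := 2) (w := 1) (fun j => ?_) (by ring)
    obtain ⟨t, ht0, htl, htu, ht⟩ := hoff j
    obtain rfl | rfl : t = 2 ∨ t = 1 := by omega
    · left; simpa using ht
    · right; simpa using ht

end Propagation

section LatinSquare
variable {n c : ℕ} [NeZero n] {L : Fin n → Fin n → ZMod n}

theorem IsLatin.nearHalfSteps (hL : IsLatin n L) (hc : n = 2 * c) (hd : innerDist n L = c - 1)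
    (k : Fin n) : NearHalfSteps c (L k) := fun a b hab =>
  nearHalf_sub_of_le_zdist hc (fun h => absurd (congrArg Fin.val (hL.1 k h)) (by omega))
    (hd ▸ innerDist_le_zdist_row_s17 L k hab)

theorem IsLatin.nearHalf_sub (hL : IsLatin n L) (hc : n = 2 * c) (hd : innerDist n L = c - 1)
    {a b : Fin n} (hab : a.val + 1 = b.val) (j : Fin n) : NearHalf c (L b j - L a j) :=
  nearHalf_sub_of_le_zdist hc (fun h => absurd (congrArg Fin.val (hL.2 j h)) (by omega))
    (hd ▸ innerDist_le_zdist_col L j hab)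

theorem IsLatin.exists_sub_eq_iff (hL : IsLatin n L) (hc : n = 2 * c) (hc3 : 3 ≤ c)
    (hd : innerDist n L = c - 1) {a b d : Fin n} (hab : a.val + 1 = b.val)
    (hbd : b.val + 1 = d.val) :
    (∃ v, ∀ j, L b j - L a j = v) ↔ ∃ w, ∀ j, L d j - L b j = w := by
  have hsep : ∀ j, L d j ≠ L a j := fun j h => absurd (congrArg Fin.val (hL.2 j h)) (by omega)
  have hneg : ∀ {a b : Fin n}, a.val + 1 = b.val → ∀ j, NearHalf c (L a j - L b j) :=
    fun hab j => by simpa using (hL.nearHalf_sub hc hd hab j).neg hc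
  constructor
  · exact exists_sub_eq_of_exists_sub_eq hc hc3 (hL.1 a) (hL.1 d) (hL.nearHalfSteps hc hd a)
      (hL.nearHalfSteps hc hd d) (hL.nearHalf_sub hc hd hab) (hL.nearHalf_sub hc hd hbd) hsep
  · rintro ⟨w, hw⟩
    obtain ⟨v, hv⟩ := exists_sub_eq_of_exists_sub_eq hc hc3 (hL.1 d) (hL.1 a)
      (hL.nearHalfSteps hc hd d) (hL.nearHalfSteps hc hd a) (hneg hbd) (hneg hab)
      (fun j h => hsep j h.symm) ⟨-w, fun j => by linear_combination -hw j⟩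
    exact ⟨-v, fun j => by linear_combination -hv j⟩

end LatinSquare

theorem stmt17 (n : ℕ) (hn : 6 ≤ n) (he : Even n) (L : Fin n → Fin n → ZMod n)
    (hL : IsLatin n L) (hd : innerDist n L = n / 2 - 1)
    (i : ℕ) (hi : i + 1 < n)
    (hsame : ∀ j : ℕ, ∀ hj : j + 1 < n,
      L ⟨i, Nat.lt_of_succ_lt hi⟩ ⟨j + 1, hj⟩ -
        L ⟨i, Nat.lt_of_succ_lt hi⟩ ⟨j, Nat.lt_of_succ_lt hj⟩ =
      L ⟨i + 1, hi⟩ ⟨j + 1, hj⟩ - L ⟨i + 1, hi⟩ ⟨j, Nat.lt_of_succ_lt hj⟩) :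
    IsRowProduct n L := by
  obtain ⟨c, hc⟩ := he
  replace hc : n = 2 * c := by omega
  have : NeZero n := ⟨by omega⟩
  replace hd : innerDist n L = c - 1 := by omega
  let P : ℕ → Prop := fun k =>
    ∀ hk : k + 1 < n, ∃ v, ∀ j, L ⟨k + 1, hk⟩ j - L ⟨k, by omega⟩ j = v
  have hstep : ∀ k, k + 1 < n - 1 → (P k ↔ P (k + 1)) := fun k hk =>
    have h := hL.exists_sub_eq_iff hc (by omega) hd (a := ⟨k, by omega⟩)
      (b := ⟨k + 1, by omega⟩) (d := ⟨k + 2, by omega⟩) rfl rfl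
    ⟨fun hP _ => h.1 (hP (by omega)), fun hP _ => h.2 (hP (by omega))⟩
  have hP := forall_lt_of_succ_iff hstep (by omega)
    (show P i from fun _ => exists_sub_eq_of_sub_eq_sub hsame)
  exact isRowProduct_of_exists_sub_eq fun k hk => hP k (by omega) hk
end
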